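/- arXiv:1208.0509 — 4 statements merged into one kernel-verified Lean document; each statement's English description precedes it below -/
import Mathlib

section
/- Let d = 1, let p ∈ ℝ, and let k ≥ 1. Let X be a set of 2k points in ℝ partitioned into 2 color classes C_0, C_1 of exactly k points each, with X ∪ {p} in general position (i.e., all 2k+1 points pairwise distinct). If cBP_k(X) > 0, then cBP_k(X) ≥ ⌈k/2⌉! · ⌊k/2⌋!. -/
open scoped Classical

/-- A set of points in `ℝ^d` is in *general position* if for every `j < d`,
no `j + 2` of the points lie on a common `j`-dimensional affine subspace. -/
def GenPos (d : ℕ) (P : Set (Fin d → ℝ)) : Prop :=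
  ∀ j < d, ∀ S : Finset (Fin d → ℝ), ↑S ⊆ P → S.card = j + 2 →
    ¬ ∃ A : AffineSubspace ℝ (Fin d → ℝ),
        Module.finrank ℝ A.direction = j ∧ (S : Set (Fin d → ℝ)) ⊆ (A : Set (Fin d → ℝ))

/-- `cBP d k p X C` is the number of unordered colored Birch partitions of the point set `X`
(with color classes `C 0, …, C d`) to the point `p`: partitions of `X` into `k` blocks, each
of exactly `d + 1` points, each containing every color exactly once, and each containing `p`
in its convex hull. -/
noncomputable def cBP (d k : ℕ) (p : Fin d → ℝ) (X : Finset (Fin d → ℝ))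
    (C : Fin (d + 1) → Finset (Fin d → ℝ)) : ℕ :=
  Set.ncard { P : Finset (Finset (Fin d → ℝ)) |
    P.card = k ∧
    (∀ B ∈ P, ∀ B' ∈ P, B ≠ B' → Disjoint B B') ∧
    P.biUnion id = X ∧
    ∀ B ∈ P, B.card = d + 1 ∧ (∀ i : Fin (d + 1), (B ∩ C i).card = 1) ∧
      p ∈ convexHull ℝ (B : Set (Fin d → ℝ)) }

private lemma funext1 {u v : Fin 1 → ℝ} (h : u 0 = v 0) : u = v :=
  funext fun i => by rw [Fin.eq_zero i]; exact h

private lemma mem_conv_pair {p u w : Fin 1 → ℝ} :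
    p ∈ convexHull ℝ ({u, w} : Set (Fin 1 → ℝ)) ↔
      (u 0 ≤ p 0 ∧ p 0 ≤ w 0) ∨ (w 0 ≤ p 0 ∧ p 0 ≤ u 0) := by
  rw [convexHull_pair]
  constructor
  · rintro ⟨a, b, ha, hb, hab, h⟩
    have h0 : a * u 0 + b * w 0 = p 0 := by
      have := congrFun h 0
      simpa using this
    have e1 : p 0 - u 0 = b * (w 0 - u 0) := by linear_combination (u 0) * hab - h0
    have e2 : w 0 - p 0 = a * (w 0 - u 0) := by linear_combination h0 - (w 0) * hab
    rcases le_total (u 0) (w 0) with hc | hc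
    · exact Or.inl ⟨by nlinarith [mul_nonneg hb (sub_nonneg.mpr hc)],
        by nlinarith [mul_nonneg ha (sub_nonneg.mpr hc)]⟩
    · exact Or.inr ⟨by nlinarith [mul_nonneg ha (sub_nonneg.mpr hc)],
        by nlinarith [mul_nonneg hb (sub_nonneg.mpr hc)]⟩
  · intro h
    have hseg : p 0 ∈ segment ℝ (u 0) (w 0) := by
      rw [segment_eq_uIcc, Set.mem_uIcc]
      tauto
    obtain ⟨a, b, ha, hb, hab, h0⟩ := hseg
    exact ⟨a, b, ha, hb, hab, funext fun i => by rw [Fin.eq_zero i]; simpa using h0⟩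

private lemma fact_min (a b k : ℕ) (h : a + b = k) :
    Nat.factorial ((k + 1) / 2) * Nat.factorial (k / 2) ≤ Nat.factorial a * Nat.factorial b := by
  have hk2 : (k + 1) / 2 = k - k / 2 := by omega
  have h1 : k.choose (k / 2) * (k / 2).factorial * (k - k / 2).factorial = k.factorial :=
    Nat.choose_mul_factorial_mul_factorial (Nat.div_le_self k 2)
  have h2 : k.choose a * a.factorial * b.factorial = k.factorial := by
    have := Nat.choose_mul_factorial_mul_factorial (show a ≤ k by omega)
    rwa [show k - a = b by omega] at this
  have h3 : k.choose a ≤ k.choose (k / 2) := Nat.choose_le_middle a k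
  have h4 : 0 < k.choose (k / 2) := Nat.choose_pos (Nat.div_le_self k 2)
  have key : k.choose (k / 2) * (Nat.factorial ((k + 1) / 2) * Nat.factorial (k / 2)) ≤
      k.choose (k / 2) * (Nat.factorial a * Nat.factorial b) := by
    have e1 : k.choose (k / 2) * (Nat.factorial ((k + 1) / 2) * Nat.factorial (k / 2)) = k.factorial := by
      rw [hk2, ← h1]; ring
    have e2 : k.factorial ≤ k.choose (k / 2) * (Nat.factorial a * Nat.factorial b) := by
      rw [← h2]
      calc k.choose a * a.factorial * b.factorial
          = k.choose a * (a.factorial * b.factorial) := by ring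
        _ ≤ k.choose (k / 2) * (a.factorial * b.factorial) := Nat.mul_le_mul h3 (Nat.le_refl _)
    omega
  exact Nat.le_of_mul_le_mul_left key h4

/-- For `d = 1` and `k ≥ 1`: if `X` is a set of `2k` points in `ℝ` partitioned into two
color classes of `k` points each, with `X ∪ {p}` in general position (all points pairwise
distinct), and `cBP k X > 0`, then `cBP k X ≥ ⌈k/2⌉! · ⌊k/2⌋!`. -/
theorem cBP_lower_bound_dim_one (k : ℕ) (hk : 1 ≤ k)
    (p : Fin 1 → ℝ) (X : Finset (Fin 1 → ℝ)) (C : Fin 2 → Finset (Fin 1 → ℝ))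
    (hXcard : X.card = 2 * k)
    (hccard : ∀ i : Fin 2, (C i).card = k)
    (hcdisj : ∀ i j : Fin 2, i ≠ j → Disjoint (C i) (C j))
    (hX : X = Finset.univ.biUnion C)
    (hpX : p ∉ X)
    (hgen : GenPos 1 (↑X ∪ {p}))
    (hpos : 0 < cBP 1 k p X C) :
    Nat.factorial ((k + 1) / 2) * Nat.factorial (k / 2) ≤ cBP 1 k p X C := by
  classical
  let S : Set (Finset (Finset (Fin 1 → ℝ))) := { P : Finset (Finset (Fin 1 → ℝ)) |
    P.card = k ∧
    (∀ B ∈ P, ∀ B' ∈ P, B ≠ B' → Disjoint B B') ∧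
    P.biUnion id = X ∧
    ∀ B ∈ P, B.card = 2 ∧ (∀ i : Fin 2, (B ∩ C i).card = 1) ∧
      p ∈ convexHull ℝ (B : Set (Fin 1 → ℝ)) }
  have hcBP : cBP 1 k p X C = S.ncard := rfl
  rw [hcBP] at hpos ⊢
  obtain ⟨P, hP⟩ := Set.nonempty_of_ncard_ne_zero hpos.ne'
  obtain ⟨hPk, hPdisj, hPun, hPblk⟩ := hP
  -- basic facts
  have hxp : ∀ x ∈ X, x 0 ≠ p 0 := by
    intro x hx h
    exact hpX (by rwa [funext1 h] at hx)
  have hC01 : ∀ x ∈ X, x ∈ C 0 ∨ x ∈ C 1 := by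
    intro x hx
    rw [hX] at hx
    simp only [Finset.mem_biUnion, Finset.mem_univ, true_and] at hx
    obtain ⟨i, hi⟩ := hx
    fin_cases i
    · exact Or.inl hi
    · exact Or.inr hi
  have hd01 : ∀ {x : Fin 1 → ℝ}, x ∈ C 0 → x ∉ C 1 := by
    intro x hx
    exact Finset.disjoint_left.mp (hcdisj 0 1 (by decide)) hx
  set L : Finset (Fin 1 → ℝ) := X.filter (fun v => v 0 < p 0) with hLdef
  set R : Finset (Fin 1 → ℝ) := X.filter (fun v => p 0 < v 0) with hRdef
  have hLmem : ∀ x, x ∈ L ↔ x ∈ X ∧ x 0 < p 0 := fun x => by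
    rw [hLdef]; exact Finset.mem_filter
  have hRmem : ∀ x, x ∈ R ↔ x ∈ X ∧ p 0 < x 0 := fun x => by
    rw [hRdef]; exact Finset.mem_filter
  have hLX : L ⊆ X := by rw [hLdef]; exact Finset.filter_subset _ _
  have hRX : R ⊆ X := by rw [hRdef]; exact Finset.filter_subset _ _
  have hsplit : ∀ x ∈ X, x ∈ L ∨ x ∈ R := by
    intro x hx
    rcases lt_trichotomy (x 0) (p 0) with h | h | h
    · exact Or.inl ((hLmem x).mpr ⟨hx, h⟩)
    · exact absurd h (hxp x hx)
    · exact Or.inr ((hRmem x).mpr ⟨hx, h⟩)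
  have hLR : ∀ x ∈ L, ∀ y ∈ R, x ≠ y := by
    intro x hx y hy h
    have h1 := (hLmem x).mp hx
    have h2 := (hRmem y).mp hy
    rw [h] at h1
    linarith [h1.2, h2.2]
  -- structure of blocks of the given partition
  have hXsub : ∀ B ∈ P, B ⊆ X := by
    intro B hB x hx
    rw [← hPun]
    exact Finset.mem_biUnion.mpr ⟨B, hB, hx⟩
  have hblock : ∀ B ∈ P, ∃ u w, u ∈ L ∧ w ∈ R ∧ B = {u, w} ∧
      ((u ∈ C 0 ∧ w ∈ C 1) ∨ (u ∈ C 1 ∧ w ∈ C 0)) := by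
    intro B hB
    obtain ⟨hB2, hBC, hBp⟩ := hPblk B hB
    obtain ⟨u, hu⟩ := Finset.card_eq_one.mp (hBC 0)
    obtain ⟨w, hw⟩ := Finset.card_eq_one.mp (hBC 1)
    have huB : u ∈ B ∧ u ∈ C 0 :=
      Finset.mem_inter.mp (hu ▸ Finset.mem_singleton_self u)
    have hwB : w ∈ B ∧ w ∈ C 1 :=
      Finset.mem_inter.mp (hw ▸ Finset.mem_singleton_self w)
    have huw : u ≠ w := fun h => hd01 (h ▸ huB.2) hwB.2
    have hBuw : B = {u, w} := by
      refine (Finset.eq_of_subset_of_card_le ?_ ?_).symm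
      · intro x hx
        rcases Finset.mem_insert.mp hx with h | h
        · exact h ▸ huB.1
        · exact (Finset.mem_singleton.mp h) ▸ hwB.1
      · rw [hB2, Finset.card_pair huw]
    have hcv : (u 0 ≤ p 0 ∧ p 0 ≤ w 0) ∨ (w 0 ≤ p 0 ∧ p 0 ≤ u 0) := by
      rw [hBuw] at hBp
      have hco : ((({u, w} : Finset (Fin 1 → ℝ))) : Set (Fin 1 → ℝ)) = {u, w} := by simp
      rw [hco] at hBp
      exact mem_conv_pair.mp hBp
    have hune := hxp u (hXsub B hB huB.1)
    have hwne := hxp w (hXsub B hB hwB.1)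
    rcases hcv with ⟨h1, h2⟩ | ⟨h1, h2⟩
    · exact ⟨u, w, (hLmem u).mpr ⟨hXsub B hB huB.1, lt_of_le_of_ne h1 hune⟩,
        (hRmem w).mpr ⟨hXsub B hB hwB.1, lt_of_le_of_ne h2 (Ne.symm hwne)⟩, hBuw,
        Or.inl ⟨huB.2, hwB.2⟩⟩
    · exact ⟨w, u, (hLmem w).mpr ⟨hXsub B hB hwB.1, lt_of_le_of_ne h1 hwne⟩,
        (hRmem u).mpr ⟨hXsub B hB huB.1, lt_of_le_of_ne h2 (Ne.symm hune)⟩,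
        hBuw.trans (Finset.pair_comm u w),
        Or.inr ⟨hwB.2, huB.2⟩⟩
  -- counting
  have hsum : ∀ T : Finset (Fin 1 → ℝ), T ⊆ X → T.card = ∑ B ∈ P, (B ∩ T).card := by
    intro T hT
    have hbu : P.biUnion (fun B => B ∩ T) = T := by
      ext x
      simp only [Finset.mem_biUnion, Finset.mem_inter]
      constructor
      · rintro ⟨B, hB, hxB, hxT⟩
        exact hxT
      · intro hxT
        have hxX : x ∈ X := hT hxT
        rw [← hPun] at hxX
        obtain ⟨B, hB, hxB⟩ := Finset.mem_biUnion.mp hxX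
        exact ⟨B, hB, hxB, hxT⟩
    calc T.card = (P.biUnion fun B => B ∩ T).card := by rw [hbu]
      _ = ∑ B ∈ P, (B ∩ T).card := Finset.card_biUnion (fun B hB B' hB' hne =>
          (hPdisj B hB B' hB' hne).mono Finset.inter_subset_left Finset.inter_subset_left)
  have pair_inter_one : ∀ (u w : Fin 1 → ℝ) (T : Finset (Fin 1 → ℝ)),
      u ∈ T → w ∉ T → ({u, w} : Finset (Fin 1 → ℝ)) ∩ T = {u} := by
    intro u w T hu hw
    ext x
    simp only [Finset.mem_inter, Finset.mem_insert, Finset.mem_singleton]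
    constructor
    · rintro ⟨h | rfl, hx⟩
      · exact h
      · exact absurd hx hw
    · rintro rfl
      exact ⟨Or.inl rfl, hu⟩
  have pair_inter_none : ∀ (u w : Fin 1 → ℝ) (T : Finset (Fin 1 → ℝ)),
      u ∉ T → w ∉ T → ({u, w} : Finset (Fin 1 → ℝ)) ∩ T = ∅ := by
    intro u w T hu hw
    ext x
    simp only [Finset.mem_inter, Finset.mem_insert, Finset.mem_singleton,
      Finset.notMem_empty, iff_false, not_and]
    rintro (rfl | rfl) <;> assumption
  have hperblock : ∀ B ∈ P,
      (B ∩ (L ∩ C 0)).card = (B ∩ (R ∩ C 1)).card ∧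
      (B ∩ (L ∩ C 1)).card = (B ∩ (R ∩ C 0)).card ∧
      (B ∩ L).card = 1 ∧ (B ∩ R).card = 1 := by
    intro B hB
    obtain ⟨u, w, huL, hwR, hBuw, hcol⟩ := hblock B hB
    have hwL : w ∉ L := fun h => hLR w h w hwR rfl
    have huR : u ∉ R := fun h => hLR u huL u h rfl
    have hBL : B ∩ L = {u} := hBuw ▸ pair_inter_one u w L huL hwL
    have hBR : B ∩ R = {w} := by
      rw [hBuw, Finset.pair_comm]
      exact pair_inter_one w u R hwR huR
    rcases hcol with ⟨hu0, hw1⟩ | ⟨hu1, hw0⟩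
    · have e1 : B ∩ (L ∩ C 0) = {u} := hBuw ▸ pair_inter_one u w _
        (Finset.mem_inter.mpr ⟨huL, hu0⟩)
        (fun h => hwL (Finset.mem_inter.mp h).1)
      have e2 : B ∩ (R ∩ C 1) = {w} := by
        rw [hBuw, Finset.pair_comm]
        exact pair_inter_one w u _ (Finset.mem_inter.mpr ⟨hwR, hw1⟩)
          (fun h => huR (Finset.mem_inter.mp h).1)
      have e3 : B ∩ (L ∩ C 1) = ∅ := hBuw ▸ pair_inter_none u w _
        (fun h => hd01 hu0 (Finset.mem_inter.mp h).2)
        (fun h => hwL (Finset.mem_inter.mp h).1)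
      have e4 : B ∩ (R ∩ C 0) = ∅ := hBuw ▸ pair_inter_none u w _
        (fun h => huR (Finset.mem_inter.mp h).1)
        (fun h => hd01 (Finset.mem_inter.mp h).2 hw1)
      simp [e1, e2, e3, e4, hBL, hBR]
    · have e1 : B ∩ (L ∩ C 0) = ∅ := hBuw ▸ pair_inter_none u w _
        (fun h => hd01 (Finset.mem_inter.mp h).2 hu1)
        (fun h => hwL (Finset.mem_inter.mp h).1)
      have e2 : B ∩ (R ∩ C 1) = ∅ := hBuw ▸ pair_inter_none u w _
        (fun h => huR (Finset.mem_inter.mp h).1)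
        (fun h => hd01 hw0 (Finset.mem_inter.mp h).2)
      have e3 : B ∩ (L ∩ C 1) = {u} := hBuw ▸ pair_inter_one u w _
        (Finset.mem_inter.mpr ⟨huL, hu1⟩)
        (fun h => hwL (Finset.mem_inter.mp h).1)
      have e4 : B ∩ (R ∩ C 0) = {w} := by
        rw [hBuw, Finset.pair_comm]
        exact pair_inter_one w u _ (Finset.mem_inter.mpr ⟨hwR, hw0⟩)
          (fun h => huR (Finset.mem_inter.mp h).1)
      simp [e1, e2, e3, e4, hBL, hBR]
  have ha : (L ∩ C 0).card = (R ∩ C 1).card := by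
    rw [hsum _ (Finset.inter_subset_left.trans hLX),
      hsum _ (Finset.inter_subset_left.trans hRX)]
    exact Finset.sum_congr rfl fun B hB => (hperblock B hB).1
  have hb : (L ∩ C 1).card = (R ∩ C 0).card := by
    rw [hsum _ (Finset.inter_subset_left.trans hLX),
      hsum _ (Finset.inter_subset_left.trans hRX)]
    exact Finset.sum_congr rfl fun B hB => (hperblock B hB).2.1
  have hLk : L.card = k := by
    rw [hsum L hLX, Finset.sum_congr rfl fun B hB => (hperblock B hB).2.2.1,
      Finset.sum_const, smul_eq_mul, mul_one, hPk]
  have hLsplit : (L ∩ C 0) ∪ (L ∩ C 1) = L := by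
    ext x
    simp only [Finset.mem_union, Finset.mem_inter]
    constructor
    · rintro (⟨h, -⟩ | ⟨h, -⟩) <;> exact h
    · intro hx
      rcases hC01 x (hLX hx) with h | h
      · exact Or.inl ⟨hx, h⟩
      · exact Or.inr ⟨hx, h⟩
  have hdisj01 : Disjoint (L ∩ C 0) (L ∩ C 1) :=
    (hcdisj 0 1 (by decide)).mono Finset.inter_subset_right Finset.inter_subset_right
  have habk : (L ∩ C 0).card + (L ∩ C 1).card = k := by
    rw [← Finset.card_union_of_disjoint hdisj01, hLsplit, hLk]
  -- the injection from pairs of color-swapping bijections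
  let E := ((↥(L ∩ C 0) ≃ ↥(R ∩ C 1)) × (↥(L ∩ C 1) ≃ ↥(R ∩ C 0)))
  let Φ : E → Finset (Finset (Fin 1 → ℝ)) := fun fg =>
    ((L ∩ C 0).attach.image fun (u : ↥(L ∩ C 0)) =>
        ({(u : Fin 1 → ℝ), ((fg.1 u : ↥(R ∩ C 1)) : Fin 1 → ℝ)} : Finset (Fin 1 → ℝ))) ∪
    ((L ∩ C 1).attach.image fun (u : ↥(L ∩ C 1)) =>
        ({(u : Fin 1 → ℝ), ((fg.2 u : ↥(R ∩ C 0)) : Fin 1 → ℝ)} : Finset (Fin 1 → ℝ)))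
  have hA0 : ∀ x : ↥(L ∩ C 0), (x : Fin 1 → ℝ) ∈ L ∧ (x : Fin 1 → ℝ) ∈ C 0 :=
    fun x => Finset.mem_inter.mp x.2
  have hA1 : ∀ x : ↥(L ∩ C 1), (x : Fin 1 → ℝ) ∈ L ∧ (x : Fin 1 → ℝ) ∈ C 1 :=
    fun x => Finset.mem_inter.mp x.2
  have hB1m : ∀ x : ↥(R ∩ C 1), (x : Fin 1 → ℝ) ∈ R ∧ (x : Fin 1 → ℝ) ∈ C 1 :=
    fun x => Finset.mem_inter.mp x.2
  have hB0m : ∀ x : ↥(R ∩ C 0), (x : Fin 1 → ℝ) ∈ R ∧ (x : Fin 1 → ℝ) ∈ C 0 :=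
    fun x => Finset.mem_inter.mp x.2
  have hΦmem : ∀ (fg : E) (B : Finset (Fin 1 → ℝ)), B ∈ Φ fg ↔
      (∃ u : ↥(L ∩ C 0), B = {(u : Fin 1 → ℝ), ((fg.1 u : ↥(R ∩ C 1)) : Fin 1 → ℝ)}) ∨
      (∃ u : ↥(L ∩ C 1), B = {(u : Fin 1 → ℝ), ((fg.2 u : ↥(R ∩ C 0)) : Fin 1 → ℝ)}) := by
    intro fg B
    simp only [Φ, Finset.mem_union, Finset.mem_image, Finset.mem_attach, true_and]
    constructor
    · rintro (⟨u, hu⟩ | ⟨u, hu⟩)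
      exacts [Or.inl ⟨u, hu.symm⟩, Or.inr ⟨u, hu.symm⟩]
    · rintro (⟨u, hu⟩ | ⟨u, hu⟩)
      exacts [Or.inl ⟨u, hu.symm⟩, Or.inr ⟨u, hu.symm⟩]
  have pair_eq : ∀ {u r u' r' : Fin 1 → ℝ}, u ∈ L → r ∈ R → u' ∈ L → r' ∈ R →
      ({u, r} : Finset (Fin 1 → ℝ)) = {u', r'} → u = u' ∧ r = r' := by
    intro u r u' r' hu hr hu' hr' h
    have h1 : u ∈ ({u', r'} : Finset (Fin 1 → ℝ)) := h ▸ Finset.mem_insert_self u {r}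
    have h2 : r ∈ ({u', r'} : Finset (Fin 1 → ℝ)) := h ▸ (by simp)
    constructor
    · rcases Finset.mem_insert.mp h1 with h' | h'
      · exact h'
      · exact absurd (Finset.mem_singleton.mp h') (hLR u hu r' hr')
    · rcases Finset.mem_insert.mp h2 with h' | h'
      · exact absurd h'.symm (hLR u' hu' r hr)
      · exact Finset.mem_singleton.mp h'
  -- shape of blocks of Φ fg
  have hshape : ∀ (fg : E), ∀ B ∈ Φ fg, ∃ u r, u ∈ L ∧ r ∈ R ∧ B = {u, r} ∧
      ((u ∈ C 0 ∧ r ∈ C 1) ∨ (u ∈ C 1 ∧ r ∈ C 0)) := by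
    intro fg B hB
    rcases (hΦmem fg B).mp hB with ⟨u, rfl⟩ | ⟨u, rfl⟩
    · exact ⟨u, fg.1 u, (hA0 u).1, (hB1m (fg.1 u)).1, rfl,
        Or.inl ⟨(hA0 u).2, (hB1m (fg.1 u)).2⟩⟩
    · exact ⟨u, fg.2 u, (hA1 u).1, (hB0m (fg.2 u)).1, rfl,
        Or.inr ⟨(hA1 u).2, (hB0m (fg.2 u)).2⟩⟩
  -- each block of Φ fg is determined by any of its elements
  have huniq : ∀ (fg : E), ∀ B ∈ Φ fg, ∀ B' ∈ Φ fg, ∀ x, x ∈ B → x ∈ B' → B = B' := by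
    intro fg B hB B' hB' x hx hx'
    rcases (hΦmem fg B).mp hB with ⟨u, rfl⟩ | ⟨u, rfl⟩ <;>
      rcases (hΦmem fg B').mp hB' with ⟨v, rfl⟩ | ⟨v, rfl⟩ <;>
        simp only [Finset.mem_insert, Finset.mem_singleton] at hx hx'
    · rcases hx with rfl | rfl <;> rcases hx' with h | h
      · rw [Subtype.ext h]
      · exact absurd h (hLR _ (hA0 u).1 _ (hB1m (fg.1 v)).1)
      · exact absurd h.symm (hLR _ (hA0 v).1 _ (hB1m (fg.1 u)).1)
      · rw [fg.1.injective (Subtype.ext h)]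
    · rcases hx with rfl | rfl <;> rcases hx' with h | h
      · exact absurd (hA1 v).2 (h ▸ hd01 (hA0 u).2)
      · exact absurd h (hLR _ (hA0 u).1 _ (hB0m (fg.2 v)).1)
      · exact absurd h.symm (hLR _ (hA1 v).1 _ (hB1m (fg.1 u)).1)
      · exact absurd (hB1m (fg.1 u)).2 (h ▸ hd01 (hB0m (fg.2 v)).2)
    · rcases hx with rfl | rfl <;> rcases hx' with h | h
      · exact absurd (hA1 u).2 (h.symm ▸ hd01 (hA0 v).2)
      · exact absurd h (hLR _ (hA1 u).1 _ (hB1m (fg.1 v)).1)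
      · exact absurd h.symm (hLR _ (hA0 v).1 _ (hB0m (fg.2 u)).1)
      · exact absurd (hB1m (fg.1 v)).2 (h.symm ▸ hd01 (hB0m (fg.2 u)).2)
    · rcases hx with rfl | rfl <;> rcases hx' with h | h
      · rw [Subtype.ext h]
      · exact absurd h (hLR _ (hA1 u).1 _ (hB0m (fg.2 v)).1)
      · exact absurd h.symm (hLR _ (hA1 v).1 _ (hB0m (fg.2 u)).1)
      · rw [fg.2.injective (Subtype.ext h)]
  -- Φ fg is a valid partition
  have hΦS : ∀ fg : E, Φ fg ∈ S := by
    intro fg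
    have hΦeq : Φ fg =
      ((L ∩ C 0).attach.image fun (u : ↥(L ∩ C 0)) =>
          ({(u : Fin 1 → ℝ), ((fg.1 u : ↥(R ∩ C 1)) : Fin 1 → ℝ)} : Finset (Fin 1 → ℝ))) ∪
      ((L ∩ C 1).attach.image fun (u : ↥(L ∩ C 1)) =>
          ({(u : Fin 1 → ℝ), ((fg.2 u : ↥(R ∩ C 0)) : Fin 1 → ℝ)} : Finset (Fin 1 → ℝ))) := rfl
    have hinj0 : Function.Injective (fun (u : ↥(L ∩ C 0)) =>
        ({(u : Fin 1 → ℝ), ((fg.1 u : ↥(R ∩ C 1)) : Fin 1 → ℝ)} : Finset (Fin 1 → ℝ))) := by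
      intro u v h
      exact Subtype.ext (pair_eq (hA0 u).1 (hB1m (fg.1 u)).1 (hA0 v).1 (hB1m (fg.1 v)).1 h).1
    have hinj1 : Function.Injective (fun (u : ↥(L ∩ C 1)) =>
        ({(u : Fin 1 → ℝ), ((fg.2 u : ↥(R ∩ C 0)) : Fin 1 → ℝ)} : Finset (Fin 1 → ℝ))) := by
      intro u v h
      exact Subtype.ext (pair_eq (hA1 u).1 (hB0m (fg.2 u)).1 (hA1 v).1 (hB0m (fg.2 v)).1 h).1
    have hfamdisj : Disjoint
        ((L ∩ C 0).attach.image fun (u : ↥(L ∩ C 0)) =>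
          ({(u : Fin 1 → ℝ), ((fg.1 u : ↥(R ∩ C 1)) : Fin 1 → ℝ)} : Finset (Fin 1 → ℝ)))
        ((L ∩ C 1).attach.image fun (u : ↥(L ∩ C 1)) =>
          ({(u : Fin 1 → ℝ), ((fg.2 u : ↥(R ∩ C 0)) : Fin 1 → ℝ)} : Finset (Fin 1 → ℝ))) := by
      rw [Finset.disjoint_left]
      rintro B hB hB'
      obtain ⟨u, -, rfl⟩ := Finset.mem_image.mp hB
      obtain ⟨v, -, hv⟩ := Finset.mem_image.mp hB'
      have h := pair_eq (hA1 v).1 (hB0m (fg.2 v)).1 (hA0 u).1 (hB1m (fg.1 u)).1 hv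
      exact hd01 (h.1 ▸ (hA0 u).2 : (v : Fin 1 → ℝ) ∈ C 0) (hA1 v).2
    have hcardΦ : (Φ fg).card = k := by
      rw [hΦeq, Finset.card_union_of_disjoint hfamdisj,
        Finset.card_image_of_injective _ hinj0, Finset.card_image_of_injective _ hinj1,
        Finset.card_attach, Finset.card_attach, habk]
    have hΦdisj : ∀ B ∈ Φ fg, ∀ B' ∈ Φ fg, B ≠ B' → Disjoint B B' := by
      intro B hB B' hB' hne
      rw [Finset.disjoint_left]
      intro x hxB hxB'
      exact hne (huniq fg B hB B' hB' x hxB hxB')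
    have hΦun : (Φ fg).biUnion id = X := by
      ext x
      simp only [Finset.mem_biUnion, id]
      constructor
      · rintro ⟨B, hB, hxB⟩
        obtain ⟨u, r, huL, hrR, rfl, -⟩ := hshape fg B hB
        rcases Finset.mem_insert.mp hxB with rfl | h
        · exact hLX huL
        · exact hRX ((Finset.mem_singleton.mp h) ▸ hrR)
      · intro hx
        rcases hsplit x hx with hxL | hxR
        · rcases hC01 x hx with hx0 | hx1
          · refine ⟨_, (hΦmem fg _).mpr
              (Or.inl ⟨⟨x, Finset.mem_inter.mpr ⟨hxL, hx0⟩⟩, rfl⟩), ?_⟩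
            exact Finset.mem_insert_self _ _
          · refine ⟨_, (hΦmem fg _).mpr
              (Or.inr ⟨⟨x, Finset.mem_inter.mpr ⟨hxL, hx1⟩⟩, rfl⟩), ?_⟩
            exact Finset.mem_insert_self _ _
        · rcases hC01 x hx with hx0 | hx1
          · refine ⟨_, (hΦmem fg _).mpr
              (Or.inr ⟨fg.2.symm ⟨x, Finset.mem_inter.mpr ⟨hxR, hx0⟩⟩, rfl⟩), ?_⟩
            have : fg.2 (fg.2.symm ⟨x, Finset.mem_inter.mpr ⟨hxR, hx0⟩⟩) =
                ⟨x, Finset.mem_inter.mpr ⟨hxR, hx0⟩⟩ := fg.2.apply_symm_apply _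
            rw [this]
            exact Finset.mem_insert_of_mem (Finset.mem_singleton_self x)
          · refine ⟨_, (hΦmem fg _).mpr
              (Or.inl ⟨fg.1.symm ⟨x, Finset.mem_inter.mpr ⟨hxR, hx1⟩⟩, rfl⟩), ?_⟩
            have : fg.1 (fg.1.symm ⟨x, Finset.mem_inter.mpr ⟨hxR, hx1⟩⟩) =
                ⟨x, Finset.mem_inter.mpr ⟨hxR, hx1⟩⟩ := fg.1.apply_symm_apply _
            rw [this]
            exact Finset.mem_insert_of_mem (Finset.mem_singleton_self x)
    have hΦblk : ∀ B ∈ Φ fg, B.card = 2 ∧ (∀ i : Fin 2, (B ∩ C i).card = 1) ∧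
        p ∈ convexHull ℝ (B : Set (Fin 1 → ℝ)) := by
      intro B hB
      obtain ⟨u, r, huL, hrR, rfl, hcol⟩ := hshape fg B hB
      have hur : u ≠ r := hLR u huL r hrR
      refine ⟨Finset.card_pair hur, ?_, ?_⟩
      · intro i
        fin_cases i
        · show (({u, r} : Finset (Fin 1 → ℝ)) ∩ C 0).card = 1
          rcases hcol with ⟨h0, h1⟩ | ⟨h0, h1⟩
          · rw [pair_inter_one u r (C 0) h0 (fun h => hd01 h h1)]
            exact Finset.card_singleton u
          · rw [Finset.pair_comm, pair_inter_one r u (C 0) h1 (fun h => hd01 h h0)]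
            exact Finset.card_singleton r
        · show (({u, r} : Finset (Fin 1 → ℝ)) ∩ C 1).card = 1
          rcases hcol with ⟨h0, h1⟩ | ⟨h0, h1⟩
          · rw [Finset.pair_comm, pair_inter_one r u (C 1) h1 (hd01 h0)]
            exact Finset.card_singleton r
          · rw [pair_inter_one u r (C 1) h0 (hd01 h1)]
            exact Finset.card_singleton u
      · have h1 := (hLmem u).mp huL
        have h2 := (hRmem r).mp hrR
        have hco : ((({u, r} : Finset (Fin 1 → ℝ))) : Set (Fin 1 → ℝ)) = {u, r} := by simp
        rw [hco]
        exact mem_conv_pair.mpr (Or.inl ⟨le_of_lt h1.2, le_of_lt h2.2⟩)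
    exact ⟨hcardΦ, hΦdisj, hΦun, hΦblk⟩
  -- Φ is injective
  have hΦinj : Function.Injective Φ := by
    intro fg fg' h
    have key : ∀ (fg fg' : E), Φ fg = Φ fg' → ∀ u : ↥(L ∩ C 0), fg.1 u = fg'.1 u := by
      intro fg fg' h u
      have hBmem : ({(u : Fin 1 → ℝ), ((fg.1 u : ↥(R ∩ C 1)) : Fin 1 → ℝ)} :
          Finset (Fin 1 → ℝ)) ∈ Φ fg' := by
        rw [← h]
        exact (hΦmem fg _).mpr (Or.inl ⟨u, rfl⟩)
      rcases (hΦmem fg' _).mp hBmem with ⟨v, hv⟩ | ⟨v, hv⟩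
      · have he := pair_eq (hA0 u).1 (hB1m (fg.1 u)).1 (hA0 v).1 (hB1m (fg'.1 v)).1 hv
        have huv : u = v := Subtype.ext he.1
        rw [huv]
        exact Subtype.ext (huv ▸ he.2)
      · have he := pair_eq (hA0 u).1 (hB1m (fg.1 u)).1 (hA1 v).1 (hB0m (fg'.2 v)).1 hv
        exact absurd (hA1 v).2 (he.1 ▸ hd01 (hA0 u).2)
    have key2 : ∀ (fg fg' : E), Φ fg = Φ fg' → ∀ u : ↥(L ∩ C 1), fg.2 u = fg'.2 u := by
      intro fg fg' h u
      have hBmem : ({(u : Fin 1 → ℝ), ((fg.2 u : ↥(R ∩ C 0)) : Fin 1 → ℝ)} :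
          Finset (Fin 1 → ℝ)) ∈ Φ fg' := by
        rw [← h]
        exact (hΦmem fg _).mpr (Or.inr ⟨u, rfl⟩)
      rcases (hΦmem fg' _).mp hBmem with ⟨v, hv⟩ | ⟨v, hv⟩
      · have he := pair_eq (hA1 u).1 (hB0m (fg.2 u)).1 (hA0 v).1 (hB1m (fg'.1 v)).1 hv
        exact absurd (hA1 u).2 (he.1 ▸ hd01 (hA0 v).2)
      · have he := pair_eq (hA1 u).1 (hB0m (fg.2 u)).1 (hA1 v).1 (hB0m (fg'.2 v)).1 hv
        have huv : u = v := Subtype.ext he.1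
        rw [huv]
        exact Subtype.ext (huv ▸ he.2)
    exact Prod.ext (Equiv.ext fun u => key _ _ h u) (Equiv.ext fun u => key2 _ _ h u)
  -- finiteness of S
  have hSfin : S.Finite := by
    apply Set.Finite.subset (Finset.finite_toSet (X.powerset.powerset))
    rintro Q ⟨-, -, hQun, -⟩
    simp only [Finset.mem_coe, Finset.mem_powerset]
    intro B hB
    rw [Finset.mem_powerset, ← hQun]
    intro x hx
    exact Finset.mem_biUnion.mpr ⟨B, hB, hx⟩
  -- cardinality of E
  have e0 : ↥(L ∩ C 0) ≃ ↥(R ∩ C 1) := Fintype.equivOfCardEq (by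
    simp only [Fintype.card_coe]; exact ha)
  have e1 : ↥(L ∩ C 1) ≃ ↥(R ∩ C 0) := Fintype.equivOfCardEq (by
    simp only [Fintype.card_coe]; exact hb)
  have hcardE : Fintype.card E =
      Nat.factorial (L ∩ C 0).card * Nat.factorial (L ∩ C 1).card := by
    rw [Fintype.card_prod, Fintype.card_equiv e0, Fintype.card_equiv e1,
      Fintype.card_coe, Fintype.card_coe]
  have hrange : Set.range Φ ⊆ S := by
    rintro Q ⟨fg, rfl⟩
    exact hΦS fg
  have hineq : Fintype.card E ≤ S.ncard := by
    calc Fintype.card E = Nat.card E := (Nat.card_eq_fintype_card).symm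
      _ = Nat.card (Set.range Φ) := (Nat.card_range_of_injective hΦinj).symm
      _ = (Set.range Φ).ncard := Nat.card_coe_set_eq _
      _ ≤ S.ncard := Set.ncard_le_ncard hrange hSfin
  calc Nat.factorial ((k + 1) / 2) * Nat.factorial (k / 2)
      ≤ Nat.factorial (L ∩ C 0).card * Nat.factorial (L ∩ C 1).card :=
        fact_min _ _ k habk
    _ = Fintype.card E := hcardE.symm
    _ ≤ S.ncard := hineq
end

section
/- Let d = 1, let r ≥ 2 be a prime, and let N = 2(r−1). Let f : Δ_N → ℝ be an affine map on the standard N-simplex whose N+1 vertices are colored with 3 colors with color classes satisfying |C_0| = |C_1| = r−1 and |C_2| = 1, and suppose the N+1 image points f(v) of the vertices are in general position (pairwise distinct). Then T(f) ≥ ⌈(r−1)/2⌉! · ⌊(r−1)/2⌋!. -/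
open scoped Classical

/-- `tverbergCount d N r f c` is the number of unordered colored Tverberg partitions for the
affine map `f` on the standard `N`-simplex (vertex `i` being `Pi.single i 1`), whose vertices
are colored by `c` with `d + 2` colors: partitions of the `N + 1` vertices into `r` rainbow
blocks whose images under `f` have intersecting convex hulls. -/
noncomputable def tverbergCount (d N r : ℕ) (f : (Fin (N + 1) → ℝ) →ᵃ[ℝ] (Fin d → ℝ))
    (c : Fin (N + 1) → Fin (d + 2)) : ℕ :=
  Set.ncard { P : Finset (Finset (Fin (N + 1))) |
    P.card = r ∧
    (∀ B ∈ P, ∀ B' ∈ P, B ≠ B' → Disjoint B B') ∧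
    P.biUnion id = Finset.univ ∧
    (∀ B ∈ P, ∀ j : Fin (d + 2), (B.filter fun i => c i = j).card ≤ 1) ∧
    ∃ x : Fin d → ℝ, ∀ B ∈ P,
      x ∈ convexHull ℝ ((fun i => f (Pi.single i 1)) '' (B : Set (Fin (N + 1)))) }

/-!
On the line, let `m` be the median of the `2k + 1` image points, so that `k` points lie on each
side of it. Matching the points left of `m` bijectively with the points right of `m` and adding
the block `{m}` gives `k + 1` blocks whose convex hulls all contain `f m`; the partition is
rainbow as soon as every pair has two colors. Color `0` or `1` has a class `C` of size `k`
avoiding `m`; if `a` of its points lie left of `m`, then `a` points right of `m` lie outside `C`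
and `k - a` points on each side lie in `C` resp. outside it. Matching the left points of `C`
with the right points outside `C`, and the left points outside `C` with the right points of `C`,
yields `a! (k - a)! ≥ ⌈k/2⌉! ⌊k/2⌋!` distinct rainbow Tverberg partitions.
-/

open Finset Function

theorem factorial_half_mul_factorial_half_le (a b : ℕ) :
    ((a + b + 1) / 2).factorial * ((a + b) / 2).factorial ≤ a.factorial * b.factorial := by
  set k := a + b
  have hmiddle := Nat.add_choose_mul_factorial_mul_factorial ((k + 1) / 2) (k / 2)
  rw [show (k + 1) / 2 + k / 2 = k by omega] at hmiddle
  refine Nat.le_of_mul_le_mul_left ?_ (Nat.choose_pos (show b ≤ k by omega))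
  calc k.choose b * (((k + 1) / 2).factorial * (k / 2).factorial)
      ≤ k.choose (k / 2) * (((k + 1) / 2).factorial * (k / 2).factorial) := by
        gcongr; exact Nat.choose_le_middle b k
    _ = k.factorial := by rw [← hmiddle]; ring
    _ = k.choose b * (a.factorial * b.factorial) := by
        rw [← Nat.add_choose_mul_factorial_mul_factorial a b]; ring

namespace Tuple

variable {β : Type*} [LinearOrder β] {n : ℕ} {g : Fin n → β}

theorem strictMono_comp_sort (hg : Injective g) : StrictMono (g ∘ sort g) :=
  (monotone_sort g).strictMono_of_injective (hg.comp (sort g).injective)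

theorem card_filter_lt_apply_sort (hg : Injective g) (i : Fin n) :
    #{v | g v < g (sort g i)} = i := by
  have hfilter : ({v | g v < g (sort g i)} : Finset (Fin n)) =
      (Iio i).map (sort g).toEmbedding := by
    ext v
    rw [mem_map_equiv, mem_Iio, ← (strictMono_comp_sort hg).lt_iff_lt]
    simp
  rw [hfilter, card_map, Fin.card_Iio]

theorem card_filter_apply_sort_lt (hg : Injective g) (i : Fin n) :
    #{v | g (sort g i) < g v} = n - 1 - i := by
  have hfilter : ({v | g (sort g i) < g v} : Finset (Fin n)) =
      (Ioi i).map (sort g).toEmbedding := by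
    ext v
    rw [mem_map_equiv, mem_Ioi, ← (strictMono_comp_sort hg).lt_iff_lt]
    simp
  rw [hfilter, card_map, Fin.card_Ioi]

end Tuple

theorem exists_median {β : Type*} [LinearOrder β] (k : ℕ) {g : Fin (2 * k + 1) → β}
    (hg : Injective g) :
    ∃ m, #{v | g v < g m} = k ∧ #{v | g m < g v} = k := by
  refine ⟨Tuple.sort g ⟨k, by omega⟩, ?_, ?_⟩
  · exact Tuple.card_filter_lt_apply_sort hg _
  · rw [Tuple.card_filter_apply_sort_lt hg]
    simp only
    omega

section MatchingPartition

variable {α : Type*} [DecidableEq α] {L R : Finset α} {m : α}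

theorem eq_and_eq_of_pair_eq_pair (hLR : Disjoint L R) {a a' b b' : α} (ha : a ∈ L)
    (hb' : b' ∈ R) (h : ({a, b} : Finset α) = {a', b'}) : a = a' ∧ b = b' := by
  have h' : ({a, b} : Set α) = {a', b'} := by rw [← coe_pair, ← coe_pair, h]
  rcases Set.pair_eq_pair_iff.1 h' with h'' | ⟨rfl, -⟩
  · exact h''
  · exact absurd rfl (disjoint_iff_ne.1 hLR a ha a hb')

def matchingPartition (m : α) (ρ : L ≃ R) : Finset (Finset α) :=
  insert {m} (univ.image fun l : L => {(l : α), (ρ l : α)})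

theorem mem_matchingPartition {ρ : L ≃ R} {B : Finset α} :
    B ∈ matchingPartition m ρ ↔ B = {m} ∨ ∃ l : L, {(l : α), (ρ l : α)} = B := by
  simp [matchingPartition]

theorem card_matchingPartition (hLR : Disjoint L R) (hmL : m ∉ L) (ρ : L ≃ R) :
    #(matchingPartition m ρ) = #L + 1 := by
  have hpair : Injective fun l : L => ({(l : α), (ρ l : α)} : Finset α) := fun l l' h =>
    Subtype.ext (eq_and_eq_of_pair_eq_pair hLR l.2 (ρ l').2 h).1
  have hsingleton : {m} ∉ univ.image fun l : L => ({(l : α), (ρ l : α)} : Finset α) := by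
    simp only [mem_image, mem_univ, true_and, not_exists]
    intro l hl
    exact hmL (mem_singleton.1 (hl ▸ mem_insert_self _ _) ▸ l.2)
  rw [matchingPartition, card_insert_of_notMem hsingleton, card_image_of_injective _ hpair,
    card_univ, Fintype.card_coe]

theorem biUnion_matchingPartition (ρ : L ≃ R) :
    (matchingPartition m ρ).biUnion id = insert m (L ∪ R) := by
  ext x
  simp only [matchingPartition, biUnion_insert, id_eq, mem_union, mem_biUnion, mem_image,
    mem_univ, true_and, exists_exists_eq_and, mem_insert, mem_singleton]
  refine or_congr_right ⟨?_, ?_⟩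
  · rintro ⟨l, rfl | rfl⟩
    exacts [Or.inl l.2, Or.inr (ρ l).2]
  · rintro (hx | hx)
    · exact ⟨⟨x, hx⟩, Or.inl rfl⟩
    · exact ⟨ρ.symm ⟨x, hx⟩, Or.inr (by simp)⟩

theorem pairwiseDisjoint_matchingPartition (hLR : Disjoint L R) (hmL : m ∉ L) (hmR : m ∉ R)
    (ρ : L ≃ R) : ∀ B ∈ matchingPartition m ρ, ∀ B' ∈ matchingPartition m ρ, B ≠ B' →
      Disjoint B B' := by
  have hm (l : L) : m ∉ ({(l : α), (ρ l : α)} : Finset α) := by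
    rw [mem_insert, mem_singleton]
    rintro (h | h)
    exacts [hmL (h ▸ l.2), hmR (h ▸ (ρ l).2)]
  have hne := disjoint_iff_ne.1 hLR
  simp only [mem_matchingPartition]
  rintro _ (rfl | ⟨l, rfl⟩) _ (rfl | ⟨l', rfl⟩) hBB'
  · exact absurd rfl hBB'
  · exact disjoint_singleton_left.2 (hm l')
  · exact disjoint_singleton_right.2 (hm l)
  · have hll' : l ≠ l' := by rintro rfl; exact hBB' rfl
    rw [disjoint_iff_ne]
    simp only [mem_insert, mem_singleton]
    rintro x (rfl | rfl) y (rfl | rfl)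
    · exact Subtype.coe_injective.ne hll'
    · exact hne _ l.2 _ (ρ l').2
    · exact (hne _ l'.2 _ (ρ l).2).symm
    · exact Subtype.coe_injective.ne (ρ.injective.ne hll')

theorem matchingPartition_injective (hLR : Disjoint L R) (hmL : m ∉ L) :
    Injective (matchingPartition (L := L) (R := R) m) := by
  intro ρ ρ' h
  ext l
  have hmem : {(l : α), (ρ l : α)} ∈ matchingPartition m ρ' :=
    h ▸ mem_matchingPartition.2 (Or.inr ⟨l, rfl⟩)
  rcases mem_matchingPartition.1 hmem with hm | ⟨l', hl'⟩
  · exact absurd (mem_singleton.1 (hm ▸ mem_insert_self _ _) ▸ l.2) hmL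
  · obtain ⟨hll', hρ⟩ := eq_and_eq_of_pair_eq_pair hLR l'.2 (ρ l).2 hl'
    rw [← hρ, Subtype.ext hll']

end MatchingPartition

theorem card_filter_pair_le_one {α β : Type*} [DecidableEq α] [DecidableEq β] {c : α → β}
    {x y : α} (h : c x ≠ c y) (j : β) : #(({x, y} : Finset α).filter (c · = j)) ≤ 1 := by
  refine card_le_one.2 fun a ha b hb => ?_
  simp only [mem_filter, mem_insert, mem_singleton] at ha hb
  obtain ⟨rfl | rfl, rfl⟩ := ha <;> obtain ⟨rfl | rfl, hb⟩ := hb <;> simp_all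

theorem mem_segment_of_le_of_le {x y z : Fin 1 → ℝ} (hxy : x 0 ≤ y 0) (hyz : y 0 ≤ z 0) :
    y ∈ segment ℝ x z := by
  let e := LinearEquiv.funUnique (Fin 1) ℝ ℝ
  have h := Set.mem_image_of_mem e.symm.toLinearMap.toAffineMap
    (Icc_subset_segment (𝕜 := ℝ) ⟨hxy, hyz⟩)
  have he (v : Fin 1 → ℝ) : e.symm (v 0) = v := e.symm_apply_apply v
  rw [image_segment] at h
  simpa only [LinearMap.coe_toAffineMap, LinearEquiv.coe_coe, he] using h

theorem factorial_mul_factorial_le_natCard_equiv {X Y : Type*} [Finite X] [Finite Y]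
    (p : X → Prop) (q : Y → Prop) (h : Nat.card {x // p x} = Nat.card {y // q y})
    (h' : Nat.card {x // ¬p x} = Nat.card {y // ¬q y}) :
    (Nat.card {x // p x}).factorial * (Nat.card {x // ¬p x}).factorial ≤
      Nat.card {e : X ≃ Y // ∀ x, q (e x) ↔ p x} := by
  classical
  let glue (e : ({x // p x} ≃ {y // q y}) × ({x // ¬p x} ≃ {y // ¬q y})) : X ≃ Y :=
    (Equiv.sumCompl p).symm.trans ((e.1.sumCongr e.2).trans (Equiv.sumCompl q))
  have glue_pos (e) (x : X) (hx : p x) : glue e x = e.1 ⟨x, hx⟩ := by simp [glue, hx]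
  have glue_neg (e) (x : X) (hx : ¬p x) : glue e x = e.2 ⟨x, hx⟩ := by simp [glue, hx]
  have hrespects (e) (x : X) : q (glue e x) ↔ p x := by
    by_cases hx : p x
    · simp [glue_pos e x hx, hx, (e.1 ⟨x, hx⟩).2]
    · simp [glue_neg e x hx, hx, (e.2 ⟨x, hx⟩).2]
  have hinj :
      Injective fun e => (⟨glue e, hrespects e⟩ : {e : X ≃ Y // ∀ x, q (e x) ↔ p x}) := by
    intro e e' hee'
    have hglue (x : X) : glue e x = glue e' x := congrArg (fun E => E.1 x) hee'
    refine Prod.ext (Equiv.ext fun x => Subtype.ext ?_) (Equiv.ext fun x => Subtype.ext ?_)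
    · simpa [glue_pos _ _ x.2] using hglue x
    · simpa [glue_neg _ _ x.2] using hglue x
  obtain ⟨e₁⟩ := Finite.card_eq.1 h
  obtain ⟨e₂⟩ := Finite.card_eq.1 h'
  have := Fintype.ofFinite X
  have := Fintype.ofFinite Y
  simpa only [Nat.card_eq_fintype_card, Fintype.card_prod, Fintype.card_equiv e₁,
    Fintype.card_equiv e₂] using Nat.card_le_card_of_injective _ hinj

theorem natCard_subtype_eq_card_filter {α : Type*} (s : Finset α) (p : α → Prop)
    [DecidablePred p] :
    Nat.card {x : s // p x} = #(s.filter p) := by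
  rw [Nat.card_eq_fintype_card, Fintype.card_subtype, ← card_map (Embedding.subtype _)]
  congr 1
  ext
  simp [and_comm]

theorem factorial_half_mul_le_natCard_rainbow_equiv {α β : Type*} [DecidableEq β]
    {L R : Finset α} {k : ℕ} (c : α → β) (j : β) (hL : #L = k) (hR : #R = k)
    (hsplit : #(L.filter (c · = j)) + #(R.filter (c · = j)) = k) :
    ((k + 1) / 2).factorial * (k / 2).factorial ≤
      Nat.card {ρ : L ≃ R // ∀ l, c (ρ l) ≠ c l} := by
  have hLsplit := card_filter_add_card_filter_not (s := L) (c · = j)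
  have hRsplit := card_filter_add_card_filter_not (s := R) (c · = j)
  calc ((k + 1) / 2).factorial * (k / 2).factorial
      ≤ (#(L.filter (c · = j))).factorial * (#(L.filter fun x => ¬c x = j)).factorial := by
        simpa only [hLsplit, hL] using factorial_half_mul_factorial_half_le
          (#(L.filter (c · = j))) (#(L.filter fun x => ¬c x = j))
    _ ≤ Nat.card {ρ : L ≃ R // ∀ l, ¬c (ρ l) = j ↔ c l = j} := by
        have hequiv := factorial_mul_factorial_le_natCard_equiv (fun x : L => c x = j)
          (fun y : R => ¬c y = j)
        rw [natCard_subtype_eq_card_filter L (c · = j),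
          natCard_subtype_eq_card_filter L (¬c · = j), natCard_subtype_eq_card_filter R (¬c · = j),
          natCard_subtype_eq_card_filter R (¬¬c · = j)] at hequiv
        simp only [not_not] at hequiv
        exact hequiv (by omega) (by omega)
    _ ≤ Nat.card {ρ : L ≃ R // ∀ l, c (ρ l) ≠ c l} := by
        refine Nat.card_le_card_of_injective
          (Subtype.impEmbedding _ _ fun ρ hρ l hl => ?_) (Subtype.impEmbedding _ _ _).injective
        simpa [hl] using hρ l

theorem natCard_rainbow_equiv_le_tverbergCount {N : ℕ}
    (f : (Fin (N + 1) → ℝ) →ᵃ[ℝ] (Fin 1 → ℝ)) (c : Fin (N + 1) → Fin 3) {m : Fin (N + 1)}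
    {L R : Finset (Fin (N + 1))} (hL : ∀ l ∈ L, f (Pi.single l 1) 0 < f (Pi.single m 1) 0)
    (hR : ∀ x ∈ R, f (Pi.single m 1) 0 < f (Pi.single x 1) 0)
    (hcover : insert m (L ∪ R) = univ) :
    Nat.card {ρ : L ≃ R // ∀ l, c (ρ l) ≠ c l} ≤ tverbergCount 1 N (#L + 1) f c := by
  have hmL : m ∉ L := fun h => (hL m h).false
  have hmR : m ∉ R := fun h => (hR m h).false
  have hLR : Disjoint L R := disjoint_left.2 fun x hxL hxR => (hL x hxL).asymm (hR x hxR)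
  rw [tverbergCount, ← Nat.card_coe_set_eq]
  refine Nat.card_le_card_of_injective (fun ρ => ⟨matchingPartition m ρ.1, ?_⟩)
    fun ρ ρ' h => Subtype.ext (matchingPartition_injective hLR hmL (congrArg Subtype.val h))
  refine ⟨card_matchingPartition hLR hmL ρ.1, pairwiseDisjoint_matchingPartition hLR hmL hmR ρ.1,
    (biUnion_matchingPartition ρ.1).trans hcover, ?_, f (Pi.single m 1), ?_⟩
  · intro B hB j
    rcases mem_matchingPartition.1 hB with rfl | ⟨l, rfl⟩
    · exact (card_filter_le _ _).trans (card_singleton m).le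
    · exact card_filter_pair_le_one (ρ.2 l).symm j
  · intro B hB
    rcases mem_matchingPartition.1 hB with rfl | ⟨l, rfl⟩
    · simp
    · rw [coe_pair, Set.image_pair, convexHull_pair]
      exact mem_segment_of_le_of_le (hL l l.2).le (hR _ (ρ.1 l).2).le

theorem tverbergCount_lower_bound_dim_one_general (r N : ℕ) (hr : 2 ≤ r) (hN : N = 2 * (r - 1))
    (f : (Fin (N + 1) → ℝ) →ᵃ[ℝ] (Fin 1 → ℝ))
    (c : Fin (N + 1) → Fin 3)
    (hc : ∀ j : Fin 3,
      (Finset.univ.filter fun i => c i = j).card = if (j : ℕ) = 2 then 1 else r - 1)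
    (hinj : Function.Injective fun i : Fin (N + 1) => f (Pi.single i 1)) :
    Nat.factorial ((r - 1 + 1) / 2) * Nat.factorial ((r - 1) / 2) ≤
      tverbergCount 1 N r f c := by
  obtain ⟨k, rfl⟩ : ∃ k, r = k + 1 := ⟨r - 1, by omega⟩
  obtain rfl : N = 2 * k := by simpa using hN
  simp only [add_tsub_cancel_right] at hc ⊢
  set g : Fin (2 * k + 1) → ℝ := fun i => f (Pi.single i 1) 0
  have hg : Injective g := fun i i' h => hinj (funext fun x => by rwa [Subsingleton.elim x 0])
  obtain ⟨m, hLk, hRk⟩ := exists_median k hg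
  set L : Finset (Fin (2 * k + 1)) := {v | g v < g m}
  set R : Finset (Fin (2 * k + 1)) := {v | g m < g v}
  have hLR : Disjoint L R := disjoint_filter.2 fun v _ h h' => h.asymm h'
  have hcover : insert m (L ∪ R) = univ := eq_univ_of_forall fun v => by
    rcases lt_trichotomy (g v) (g m) with h | h | h
    · simp [L, h]
    · simp [hg h]
    · simp [R, h]
  obtain ⟨j, hjm, hj⟩ : ∃ j : Fin 3, c m ≠ j ∧ #{v | c v = j} = k :=
    if h : c m = 0 then ⟨1, by simp [h], hc 1⟩ else ⟨0, h, hc 0⟩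
  have hsplit : #(L.filter (c · = j)) + #(R.filter (c · = j)) = k := by
    refine (?_ : _ = #{v | c v = j}).trans hj
    rw [← hcover, filter_insert, if_neg hjm, filter_union,
      card_union_of_disjoint (disjoint_filter_filter hLR)]
  calc _ ≤ Nat.card {ρ : L ≃ R // ∀ l, c (ρ l) ≠ c l} :=
        factorial_half_mul_le_natCard_rainbow_equiv c j hLk hRk hsplit
    _ ≤ tverbergCount 1 (2 * k) (#L + 1) f c :=
        natCard_rainbow_equiv_le_tverbergCount f c (fun l hl => (mem_filter.1 hl).2)
          (fun x hx => (mem_filter.1 hx).2) hcover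
    _ = _ := by rw [hLk]

/-- For `d = 1` and a prime `r ≥ 2`, with `N = 2(r-1)`: for any affine map `f` on the
standard `N`-simplex whose vertices are colored with 3 colors with color classes
`|C_0| = |C_1| = r - 1`, `|C_2| = 1`, and whose `N + 1` vertex images are in general
position (pairwise distinct), the number of unordered colored Tverberg partitions
satisfies `T(f) ≥ ⌈(r-1)/2⌉! · ⌊(r-1)/2⌋!`. -/
theorem tverbergCount_lower_bound_dim_one (r N : ℕ) (hr : 2 ≤ r)
    (hrp : Nat.Prime r) (hN : N = 2 * (r - 1))
    (f : (Fin (N + 1) → ℝ) →ᵃ[ℝ] (Fin 1 → ℝ))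
    (c : Fin (N + 1) → Fin 3)
    (hc : ∀ j : Fin 3,
      (Finset.univ.filter fun i => c i = j).card = if (j : ℕ) = 2 then 1 else r - 1)
    (hinj : Function.Injective fun i : Fin (N + 1) => f (Pi.single i 1))
    (hgen : GenPos 1 (Set.range fun i : Fin (N + 1) => f (Pi.single i 1))) :
    Nat.factorial ((r - 1 + 1) / 2) * Nat.factorial ((r - 1) / 2) ≤
      tverbergCount 1 N r f c :=
  tverbergCount_lower_bound_dim_one_general r N hr hN f c hc hinj
end

section
/- There exist a point p ∈ ℝ² and a set X of 9 points in ℝ² partitioned into 3 color classes C_0, C_1, C_2 of exactly 3 points each, with X ∪ {p} in general position, such that cBP_3(X) = 3. In particular, cBP_k(X) can be odd for k = d+1 when d = 2, so the hypothesis k ≥ d+2 in the evenness theorem cannot be weakened to k ≥ d+1 for d = 2. -/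
open scoped Classical

/-! ### The explicit configuration -/

def ptZ : Fin 10 → ℤ × ℤ :=
  ![(5,-5),(-4,-1),(1,0),(-1,6),(6,5),(-6,2),(-2,-5),(1,-3),(-4,3),(0,0)]

noncomputable def pt (i : Fin 10) : Fin 2 → ℝ := ![((ptZ i).1 : ℝ), ((ptZ i).2 : ℝ)]

lemma hinjZ : ∀ i j : Fin 10, i ≠ j → ptZ i ≠ ptZ j := by decide

lemma hcrossZ : ∀ i j k : Fin 10, i ≠ j → i ≠ k → j ≠ k →
    ((ptZ j).1 - (ptZ i).1) * ((ptZ k).2 - (ptZ i).2) -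
      ((ptZ j).2 - (ptZ i).2) * ((ptZ k).1 - (ptZ i).1) ≠ 0 := by decide

lemma ptne : ∀ i j : Fin 10, i ≠ j → pt i ≠ pt j := by
  intro i j hij h
  apply hinjZ i j hij
  have h0 := congrFun h 0
  have h1 := congrFun h 1
  simp [pt] at h0 h1
  exact Prod.ext h0 h1

lemma crossR : ∀ i j k : Fin 10, i ≠ j → i ≠ k → j ≠ k →
    (pt j 0 - pt i 0) * (pt k 1 - pt i 1) - (pt j 1 - pt i 1) * (pt k 0 - pt i 0) ≠ 0 := by
  intro i j k hij hik hjk h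
  apply hcrossZ i j k hij hik hjk
  simp only [pt, Matrix.cons_val_zero, Matrix.cons_val_one, Matrix.head_cons] at h
  exact_mod_cast h

lemma hp0 : pt 9 = 0 := by
  funext w
  fin_cases w <;> norm_num [pt, show ptZ 9 = (0, 0) from by decide]

@[simp] lemma c00 : pt 0 0 = 5 := by norm_num [pt, show ptZ 0 = (5,-5) from by decide]
@[simp] lemma c01 : pt 0 1 = -5 := by norm_num [pt, show ptZ 0 = (5,-5) from by decide]
@[simp] lemma c10 : pt 1 0 = -4 := by norm_num [pt, show ptZ 1 = (-4,-1) from by decide]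
@[simp] lemma c11 : pt 1 1 = -1 := by norm_num [pt, show ptZ 1 = (-4,-1) from by decide]
@[simp] lemma c20 : pt 2 0 = 1 := by norm_num [pt, show ptZ 2 = (1,0) from by decide]
@[simp] lemma c21 : pt 2 1 = 0 := by norm_num [pt, show ptZ 2 = (1,0) from by decide]
@[simp] lemma c30 : pt 3 0 = -1 := by norm_num [pt, show ptZ 3 = (-1,6) from by decide]
@[simp] lemma c31 : pt 3 1 = 6 := by norm_num [pt, show ptZ 3 = (-1,6) from by decide]
@[simp] lemma c40 : pt 4 0 = 6 := by norm_num [pt, show ptZ 4 = (6,5) from by decide]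
@[simp] lemma c41 : pt 4 1 = 5 := by norm_num [pt, show ptZ 4 = (6,5) from by decide]
@[simp] lemma c50 : pt 5 0 = -6 := by norm_num [pt, show ptZ 5 = (-6,2) from by decide]
@[simp] lemma c51 : pt 5 1 = 2 := by norm_num [pt, show ptZ 5 = (-6,2) from by decide]
@[simp] lemma c60 : pt 6 0 = -2 := by norm_num [pt, show ptZ 6 = (-2,-5) from by decide]
@[simp] lemma c61 : pt 6 1 = -5 := by norm_num [pt, show ptZ 6 = (-2,-5) from by decide]
@[simp] lemma c70 : pt 7 0 = 1 := by norm_num [pt, show ptZ 7 = (1,-3) from by decide]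
@[simp] lemma c71 : pt 7 1 = -3 := by norm_num [pt, show ptZ 7 = (1,-3) from by decide]
@[simp] lemma c80 : pt 8 0 = -4 := by norm_num [pt, show ptZ 8 = (-4,3) from by decide]
@[simp] lemma c81 : pt 8 1 = 3 := by norm_num [pt, show ptZ 8 = (-4,3) from by decide]
@[simp] lemma c90 : pt 9 0 = 0 := by norm_num [pt, show ptZ 9 = (0,0) from by decide]
@[simp] lemma c91 : pt 9 1 = 0 := by norm_num [pt, show ptZ 9 = (0,0) from by decide]

@[simp] lemma n01 : pt 0 ≠ pt 1 := ptne 0 1 (by decide)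
@[simp] lemma n02 : pt 0 ≠ pt 2 := ptne 0 2 (by decide)
@[simp] lemma n03 : pt 0 ≠ pt 3 := ptne 0 3 (by decide)
@[simp] lemma n04 : pt 0 ≠ pt 4 := ptne 0 4 (by decide)
@[simp] lemma n05 : pt 0 ≠ pt 5 := ptne 0 5 (by decide)
@[simp] lemma n06 : pt 0 ≠ pt 6 := ptne 0 6 (by decide)
@[simp] lemma n07 : pt 0 ≠ pt 7 := ptne 0 7 (by decide)
@[simp] lemma n08 : pt 0 ≠ pt 8 := ptne 0 8 (by decide)
@[simp] lemma n09 : pt 0 ≠ pt 9 := ptne 0 9 (by decide)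
@[simp] lemma n10 : pt 1 ≠ pt 0 := ptne 1 0 (by decide)
@[simp] lemma n12 : pt 1 ≠ pt 2 := ptne 1 2 (by decide)
@[simp] lemma n13 : pt 1 ≠ pt 3 := ptne 1 3 (by decide)
@[simp] lemma n14 : pt 1 ≠ pt 4 := ptne 1 4 (by decide)
@[simp] lemma n15 : pt 1 ≠ pt 5 := ptne 1 5 (by decide)
@[simp] lemma n16 : pt 1 ≠ pt 6 := ptne 1 6 (by decide)
@[simp] lemma n17 : pt 1 ≠ pt 7 := ptne 1 7 (by decide)
@[simp] lemma n18 : pt 1 ≠ pt 8 := ptne 1 8 (by decide)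
@[simp] lemma n19 : pt 1 ≠ pt 9 := ptne 1 9 (by decide)
@[simp] lemma n20 : pt 2 ≠ pt 0 := ptne 2 0 (by decide)
@[simp] lemma n21 : pt 2 ≠ pt 1 := ptne 2 1 (by decide)
@[simp] lemma n23 : pt 2 ≠ pt 3 := ptne 2 3 (by decide)
@[simp] lemma n24 : pt 2 ≠ pt 4 := ptne 2 4 (by decide)
@[simp] lemma n25 : pt 2 ≠ pt 5 := ptne 2 5 (by decide)
@[simp] lemma n26 : pt 2 ≠ pt 6 := ptne 2 6 (by decide)
@[simp] lemma n27 : pt 2 ≠ pt 7 := ptne 2 7 (by decide)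
@[simp] lemma n28 : pt 2 ≠ pt 8 := ptne 2 8 (by decide)
@[simp] lemma n29 : pt 2 ≠ pt 9 := ptne 2 9 (by decide)
@[simp] lemma n30 : pt 3 ≠ pt 0 := ptne 3 0 (by decide)
@[simp] lemma n31 : pt 3 ≠ pt 1 := ptne 3 1 (by decide)
@[simp] lemma n32 : pt 3 ≠ pt 2 := ptne 3 2 (by decide)
@[simp] lemma n34 : pt 3 ≠ pt 4 := ptne 3 4 (by decide)
@[simp] lemma n35 : pt 3 ≠ pt 5 := ptne 3 5 (by decide)
@[simp] lemma n36 : pt 3 ≠ pt 6 := ptne 3 6 (by decide)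
@[simp] lemma n37 : pt 3 ≠ pt 7 := ptne 3 7 (by decide)
@[simp] lemma n38 : pt 3 ≠ pt 8 := ptne 3 8 (by decide)
@[simp] lemma n39 : pt 3 ≠ pt 9 := ptne 3 9 (by decide)
@[simp] lemma n40 : pt 4 ≠ pt 0 := ptne 4 0 (by decide)
@[simp] lemma n41 : pt 4 ≠ pt 1 := ptne 4 1 (by decide)
@[simp] lemma n42 : pt 4 ≠ pt 2 := ptne 4 2 (by decide)
@[simp] lemma n43 : pt 4 ≠ pt 3 := ptne 4 3 (by decide)
@[simp] lemma n45 : pt 4 ≠ pt 5 := ptne 4 5 (by decide)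
@[simp] lemma n46 : pt 4 ≠ pt 6 := ptne 4 6 (by decide)
@[simp] lemma n47 : pt 4 ≠ pt 7 := ptne 4 7 (by decide)
@[simp] lemma n48 : pt 4 ≠ pt 8 := ptne 4 8 (by decide)
@[simp] lemma n49 : pt 4 ≠ pt 9 := ptne 4 9 (by decide)
@[simp] lemma n50 : pt 5 ≠ pt 0 := ptne 5 0 (by decide)
@[simp] lemma n51 : pt 5 ≠ pt 1 := ptne 5 1 (by decide)
@[simp] lemma n52 : pt 5 ≠ pt 2 := ptne 5 2 (by decide)
@[simp] lemma n53 : pt 5 ≠ pt 3 := ptne 5 3 (by decide)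
@[simp] lemma n54 : pt 5 ≠ pt 4 := ptne 5 4 (by decide)
@[simp] lemma n56 : pt 5 ≠ pt 6 := ptne 5 6 (by decide)
@[simp] lemma n57 : pt 5 ≠ pt 7 := ptne 5 7 (by decide)
@[simp] lemma n58 : pt 5 ≠ pt 8 := ptne 5 8 (by decide)
@[simp] lemma n59 : pt 5 ≠ pt 9 := ptne 5 9 (by decide)
@[simp] lemma n60 : pt 6 ≠ pt 0 := ptne 6 0 (by decide)
@[simp] lemma n61 : pt 6 ≠ pt 1 := ptne 6 1 (by decide)
@[simp] lemma n62 : pt 6 ≠ pt 2 := ptne 6 2 (by decide)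
@[simp] lemma n63 : pt 6 ≠ pt 3 := ptne 6 3 (by decide)
@[simp] lemma n64 : pt 6 ≠ pt 4 := ptne 6 4 (by decide)
@[simp] lemma n65 : pt 6 ≠ pt 5 := ptne 6 5 (by decide)
@[simp] lemma n67 : pt 6 ≠ pt 7 := ptne 6 7 (by decide)
@[simp] lemma n68 : pt 6 ≠ pt 8 := ptne 6 8 (by decide)
@[simp] lemma n69 : pt 6 ≠ pt 9 := ptne 6 9 (by decide)
@[simp] lemma n70 : pt 7 ≠ pt 0 := ptne 7 0 (by decide)
@[simp] lemma n71 : pt 7 ≠ pt 1 := ptne 7 1 (by decide)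
@[simp] lemma n72 : pt 7 ≠ pt 2 := ptne 7 2 (by decide)
@[simp] lemma n73 : pt 7 ≠ pt 3 := ptne 7 3 (by decide)
@[simp] lemma n74 : pt 7 ≠ pt 4 := ptne 7 4 (by decide)
@[simp] lemma n75 : pt 7 ≠ pt 5 := ptne 7 5 (by decide)
@[simp] lemma n76 : pt 7 ≠ pt 6 := ptne 7 6 (by decide)
@[simp] lemma n78 : pt 7 ≠ pt 8 := ptne 7 8 (by decide)
@[simp] lemma n79 : pt 7 ≠ pt 9 := ptne 7 9 (by decide)
@[simp] lemma n80 : pt 8 ≠ pt 0 := ptne 8 0 (by decide)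
@[simp] lemma n81 : pt 8 ≠ pt 1 := ptne 8 1 (by decide)
@[simp] lemma n82 : pt 8 ≠ pt 2 := ptne 8 2 (by decide)
@[simp] lemma n83 : pt 8 ≠ pt 3 := ptne 8 3 (by decide)
@[simp] lemma n84 : pt 8 ≠ pt 4 := ptne 8 4 (by decide)
@[simp] lemma n85 : pt 8 ≠ pt 5 := ptne 8 5 (by decide)
@[simp] lemma n86 : pt 8 ≠ pt 6 := ptne 8 6 (by decide)
@[simp] lemma n87 : pt 8 ≠ pt 7 := ptne 8 7 (by decide)
@[simp] lemma n89 : pt 8 ≠ pt 9 := ptne 8 9 (by decide)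
@[simp] lemma n90 : pt 9 ≠ pt 0 := ptne 9 0 (by decide)
@[simp] lemma n91 : pt 9 ≠ pt 1 := ptne 9 1 (by decide)
@[simp] lemma n92 : pt 9 ≠ pt 2 := ptne 9 2 (by decide)
@[simp] lemma n93 : pt 9 ≠ pt 3 := ptne 9 3 (by decide)
@[simp] lemma n94 : pt 9 ≠ pt 4 := ptne 9 4 (by decide)
@[simp] lemma n95 : pt 9 ≠ pt 5 := ptne 9 5 (by decide)
@[simp] lemma n96 : pt 9 ≠ pt 6 := ptne 9 6 (by decide)
@[simp] lemma n97 : pt 9 ≠ pt 7 := ptne 9 7 (by decide)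
@[simp] lemma n98 : pt 9 ≠ pt 8 := ptne 9 8 (by decide)

/-! ### Convex hull helper lemmas -/

lemma zero_mem_hull (a b c : Fin 2 → ℝ) (al be ga : ℝ) (h1 : 0 ≤ al) (h2 : 0 ≤ be)
    (h3 : 0 ≤ ga) (hsum : al + be + ga = 1)
    (h00 : al * a 0 + be * b 0 + ga * c 0 = 0)
    (h01 : al * a 1 + be * b 1 + ga * c 1 = 0) :
    (0 : Fin 2 → ℝ) ∈ convexHull ℝ ({a, b, c} : Set (Fin 2 → ℝ)) := by
  have h0 : al • a + be • b + ga • c = 0 := by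
    funext w
    fin_cases w
    · simpa using h00
    · simpa using h01
  have h := (convex_convexHull ℝ ({a, b, c} : Set (Fin 2 → ℝ))).sum_mem
    (t := (Finset.univ : Finset (Fin 3))) (w := ![al, be, ga]) (z := ![a, b, c])
    (fun i _ => by fin_cases i <;> assumption)
    (by simp [Fin.sum_univ_three]; linarith)
    (fun i _ => by fin_cases i <;> apply subset_convexHull <;> simp)
  rw [Fin.sum_univ_three] at h
  simpa [h0] using h

lemma zero_not_mem_hull (a b c : Fin 2 → ℝ) (s t : ℝ)
    (ha : 0 < s * a 0 + t * a 1) (hb : 0 < s * b 0 + t * b 1) (hc : 0 < s * c 0 + t * c 1) :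
    (0 : Fin 2 → ℝ) ∉ convexHull ℝ ({a, b, c} : Set (Fin 2 → ℝ)) := by
  intro h
  have hconv : Convex ℝ {w : Fin 2 → ℝ | 0 < s * w 0 + t * w 1} := by
    refine convex_halfSpace_gt ⟨fun x y => ?_, fun r x => ?_⟩ 0 <;> simp <;> ring
  have hsub := convexHull_min (s := ({a, b, c} : Set (Fin 2 → ℝ))) ?_ hconv
  · have h0 := hsub h
    simp at h0
  · rintro w (rfl | rfl | rfl) <;> assumption

lemma lin_indep_of_cross (u v : Fin 2 → ℝ) (h : u 0 * v 1 - u 1 * v 0 ≠ 0) :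
    LinearIndependent ℝ ![u, v] := by
  rw [linearIndependent_fin2]
  constructor
  · intro hv; apply h; simp [show v = 0 from hv]
  · intro a ha
    apply h
    have h0 := congrFun ha 0
    have h1 := congrFun ha 1
    simp [Matrix.cons_val_one] at h0 h1
    rw [← h0, ← h1]; ring

lemma eq_of_finrank_zero (A : AffineSubspace ℝ (Fin 2 → ℝ))
    (hA : Module.finrank ℝ A.direction = 0) {x y : Fin 2 → ℝ}
    (hx : x ∈ A) (hy : y ∈ A) : x = y := by
  have hd : A.direction = ⊥ := Submodule.finrank_eq_zero.mp hA
  have hv := AffineSubspace.vsub_mem_direction hx hy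
  rw [hd, Submodule.mem_bot] at hv
  exact sub_eq_zero.mp hv

lemma not_on_line (A : AffineSubspace ℝ (Fin 2 → ℝ))
    (hA : Module.finrank ℝ A.direction = 1) {x y z : Fin 2 → ℝ}
    (hx : x ∈ A) (hy : y ∈ A) (hz : z ∈ A)
    (hcr : (y 0 - x 0) * (z 1 - x 1) - (y 1 - x 1) * (z 0 - x 0) ≠ 0) : False := by
  have hu : y - x ∈ A.direction := AffineSubspace.vsub_mem_direction hy hx
  have hv : z - x ∈ A.direction := AffineSubspace.vsub_mem_direction hz hx
  have hli := lin_indep_of_cross (y - x) (z - x) (by simpa using hcr)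
  have hle : Submodule.span ℝ (Set.range ![y - x, z - x]) ≤ A.direction := by
    rw [Submodule.span_le]; rintro w ⟨i, rfl⟩; fin_cases i <;> simpa
  have h2 : Module.finrank ℝ (Submodule.span ℝ (Set.range ![y - x, z - x])) = 2 := by
    rw [finrank_span_eq_card hli]; simp
  have hm := Submodule.finrank_mono hle
  omega

/-! ### The point set, colors, blocks and partitions -/

noncomputable def Xcfg : Finset (Fin 2 → ℝ) :=
  {pt 0, pt 1, pt 2, pt 3, pt 4, pt 5, pt 6, pt 7, pt 8}

noncomputable def Ccfg : Fin 3 → Finset (Fin 2 → ℝ) := fun i =>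
  if i.val = 0 then {pt 0, pt 1, pt 2}
  else if i.val = 1 then {pt 3, pt 4, pt 5}
  else {pt 6, pt 7, pt 8}

lemma hC0 : Ccfg 0 = {pt 0, pt 1, pt 2} := by norm_num [Ccfg]
lemma hC1 : Ccfg 1 = {pt 3, pt 4, pt 5} := by norm_num [Ccfg]
lemma hC2 : Ccfg 2 = {pt 6, pt 7, pt 8} := by norm_num [Ccfg]

lemma disj3 {a b c d e f : Fin 2 → ℝ} (h1 : a ∉ ({d, e, f} : Finset (Fin 2 → ℝ)))
    (h2 : b ∉ ({d, e, f} : Finset (Fin 2 → ℝ))) (h3 : c ∉ ({d, e, f} : Finset (Fin 2 → ℝ))) :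
    Disjoint ({a, b, c} : Finset (Fin 2 → ℝ)) {d, e, f} := by
  rw [Finset.disjoint_left]
  intro w hw
  simp only [Finset.mem_insert, Finset.mem_singleton] at hw
  rcases hw with rfl | rfl | rfl <;> assumption

noncomputable def T036 : Finset (Fin 2 → ℝ) := {pt 0, pt 3, pt 6}
noncomputable def T038 : Finset (Fin 2 → ℝ) := {pt 0, pt 3, pt 8}
noncomputable def T048 : Finset (Fin 2 → ℝ) := {pt 0, pt 4, pt 8}
noncomputable def T137 : Finset (Fin 2 → ℝ) := {pt 1, pt 3, pt 7}
noncomputable def T146 : Finset (Fin 2 → ℝ) := {pt 1, pt 4, pt 6}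
noncomputable def T147 : Finset (Fin 2 → ℝ) := {pt 1, pt 4, pt 7}
noncomputable def T236 : Finset (Fin 2 → ℝ) := {pt 2, pt 3, pt 6}
noncomputable def T256 : Finset (Fin 2 → ℝ) := {pt 2, pt 5, pt 6}
noncomputable def T257 : Finset (Fin 2 → ℝ) := {pt 2, pt 5, pt 7}

@[simp] lemma ne_T036_T038 : T036 ≠ T038 :=
  ne_of_mem_of_not_mem' (show pt 6 ∈ T036 by simp [T036]) (by simp [T038])
@[simp] lemma ne_T036_T048 : T036 ≠ T048 :=
  ne_of_mem_of_not_mem' (show pt 3 ∈ T036 by simp [T036]) (by simp [T048])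
@[simp] lemma ne_T036_T137 : T036 ≠ T137 :=
  ne_of_mem_of_not_mem' (show pt 0 ∈ T036 by simp [T036]) (by simp [T137])
@[simp] lemma ne_T036_T146 : T036 ≠ T146 :=
  ne_of_mem_of_not_mem' (show pt 0 ∈ T036 by simp [T036]) (by simp [T146])
@[simp] lemma ne_T036_T147 : T036 ≠ T147 :=
  ne_of_mem_of_not_mem' (show pt 0 ∈ T036 by simp [T036]) (by simp [T147])
@[simp] lemma ne_T036_T236 : T036 ≠ T236 :=
  ne_of_mem_of_not_mem' (show pt 0 ∈ T036 by simp [T036]) (by simp [T236])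
@[simp] lemma ne_T036_T256 : T036 ≠ T256 :=
  ne_of_mem_of_not_mem' (show pt 0 ∈ T036 by simp [T036]) (by simp [T256])
@[simp] lemma ne_T036_T257 : T036 ≠ T257 :=
  ne_of_mem_of_not_mem' (show pt 0 ∈ T036 by simp [T036]) (by simp [T257])
@[simp] lemma ne_T038_T036 : T038 ≠ T036 :=
  ne_of_mem_of_not_mem' (show pt 8 ∈ T038 by simp [T038]) (by simp [T036])
@[simp] lemma ne_T038_T048 : T038 ≠ T048 :=
  ne_of_mem_of_not_mem' (show pt 3 ∈ T038 by simp [T038]) (by simp [T048])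
@[simp] lemma ne_T038_T137 : T038 ≠ T137 :=
  ne_of_mem_of_not_mem' (show pt 0 ∈ T038 by simp [T038]) (by simp [T137])
@[simp] lemma ne_T038_T146 : T038 ≠ T146 :=
  ne_of_mem_of_not_mem' (show pt 0 ∈ T038 by simp [T038]) (by simp [T146])
@[simp] lemma ne_T038_T147 : T038 ≠ T147 :=
  ne_of_mem_of_not_mem' (show pt 0 ∈ T038 by simp [T038]) (by simp [T147])
@[simp] lemma ne_T038_T236 : T038 ≠ T236 :=
  ne_of_mem_of_not_mem' (show pt 0 ∈ T038 by simp [T038]) (by simp [T236])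
@[simp] lemma ne_T038_T256 : T038 ≠ T256 :=
  ne_of_mem_of_not_mem' (show pt 0 ∈ T038 by simp [T038]) (by simp [T256])
@[simp] lemma ne_T038_T257 : T038 ≠ T257 :=
  ne_of_mem_of_not_mem' (show pt 0 ∈ T038 by simp [T038]) (by simp [T257])
@[simp] lemma ne_T048_T036 : T048 ≠ T036 :=
  ne_of_mem_of_not_mem' (show pt 4 ∈ T048 by simp [T048]) (by simp [T036])
@[simp] lemma ne_T048_T038 : T048 ≠ T038 :=
  ne_of_mem_of_not_mem' (show pt 4 ∈ T048 by simp [T048]) (by simp [T038])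
@[simp] lemma ne_T048_T137 : T048 ≠ T137 :=
  ne_of_mem_of_not_mem' (show pt 0 ∈ T048 by simp [T048]) (by simp [T137])
@[simp] lemma ne_T048_T146 : T048 ≠ T146 :=
  ne_of_mem_of_not_mem' (show pt 0 ∈ T048 by simp [T048]) (by simp [T146])
@[simp] lemma ne_T048_T147 : T048 ≠ T147 :=
  ne_of_mem_of_not_mem' (show pt 0 ∈ T048 by simp [T048]) (by simp [T147])
@[simp] lemma ne_T048_T236 : T048 ≠ T236 :=
  ne_of_mem_of_not_mem' (show pt 0 ∈ T048 by simp [T048]) (by simp [T236])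
@[simp] lemma ne_T048_T256 : T048 ≠ T256 :=
  ne_of_mem_of_not_mem' (show pt 0 ∈ T048 by simp [T048]) (by simp [T256])
@[simp] lemma ne_T048_T257 : T048 ≠ T257 :=
  ne_of_mem_of_not_mem' (show pt 0 ∈ T048 by simp [T048]) (by simp [T257])
@[simp] lemma ne_T137_T036 : T137 ≠ T036 :=
  ne_of_mem_of_not_mem' (show pt 1 ∈ T137 by simp [T137]) (by simp [T036])
@[simp] lemma ne_T137_T038 : T137 ≠ T038 :=
  ne_of_mem_of_not_mem' (show pt 1 ∈ T137 by simp [T137]) (by simp [T038])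
@[simp] lemma ne_T137_T048 : T137 ≠ T048 :=
  ne_of_mem_of_not_mem' (show pt 1 ∈ T137 by simp [T137]) (by simp [T048])
@[simp] lemma ne_T137_T146 : T137 ≠ T146 :=
  ne_of_mem_of_not_mem' (show pt 3 ∈ T137 by simp [T137]) (by simp [T146])
@[simp] lemma ne_T137_T147 : T137 ≠ T147 :=
  ne_of_mem_of_not_mem' (show pt 3 ∈ T137 by simp [T137]) (by simp [T147])
@[simp] lemma ne_T137_T236 : T137 ≠ T236 :=
  ne_of_mem_of_not_mem' (show pt 1 ∈ T137 by simp [T137]) (by simp [T236])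
@[simp] lemma ne_T137_T256 : T137 ≠ T256 :=
  ne_of_mem_of_not_mem' (show pt 1 ∈ T137 by simp [T137]) (by simp [T256])
@[simp] lemma ne_T137_T257 : T137 ≠ T257 :=
  ne_of_mem_of_not_mem' (show pt 1 ∈ T137 by simp [T137]) (by simp [T257])
@[simp] lemma ne_T146_T036 : T146 ≠ T036 :=
  ne_of_mem_of_not_mem' (show pt 1 ∈ T146 by simp [T146]) (by simp [T036])
@[simp] lemma ne_T146_T038 : T146 ≠ T038 :=
  ne_of_mem_of_not_mem' (show pt 1 ∈ T146 by simp [T146]) (by simp [T038])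
@[simp] lemma ne_T146_T048 : T146 ≠ T048 :=
  ne_of_mem_of_not_mem' (show pt 1 ∈ T146 by simp [T146]) (by simp [T048])
@[simp] lemma ne_T146_T137 : T146 ≠ T137 :=
  ne_of_mem_of_not_mem' (show pt 4 ∈ T146 by simp [T146]) (by simp [T137])
@[simp] lemma ne_T146_T147 : T146 ≠ T147 :=
  ne_of_mem_of_not_mem' (show pt 6 ∈ T146 by simp [T146]) (by simp [T147])
@[simp] lemma ne_T146_T236 : T146 ≠ T236 :=
  ne_of_mem_of_not_mem' (show pt 1 ∈ T146 by simp [T146]) (by simp [T236])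
@[simp] lemma ne_T146_T256 : T146 ≠ T256 :=
  ne_of_mem_of_not_mem' (show pt 1 ∈ T146 by simp [T146]) (by simp [T256])
@[simp] lemma ne_T146_T257 : T146 ≠ T257 :=
  ne_of_mem_of_not_mem' (show pt 1 ∈ T146 by simp [T146]) (by simp [T257])
@[simp] lemma ne_T147_T036 : T147 ≠ T036 :=
  ne_of_mem_of_not_mem' (show pt 1 ∈ T147 by simp [T147]) (by simp [T036])
@[simp] lemma ne_T147_T038 : T147 ≠ T038 :=
  ne_of_mem_of_not_mem' (show pt 1 ∈ T147 by simp [T147]) (by simp [T038])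
@[simp] lemma ne_T147_T048 : T147 ≠ T048 :=
  ne_of_mem_of_not_mem' (show pt 1 ∈ T147 by simp [T147]) (by simp [T048])
@[simp] lemma ne_T147_T137 : T147 ≠ T137 :=
  ne_of_mem_of_not_mem' (show pt 4 ∈ T147 by simp [T147]) (by simp [T137])
@[simp] lemma ne_T147_T146 : T147 ≠ T146 :=
  ne_of_mem_of_not_mem' (show pt 7 ∈ T147 by simp [T147]) (by simp [T146])
@[simp] lemma ne_T147_T236 : T147 ≠ T236 :=
  ne_of_mem_of_not_mem' (show pt 1 ∈ T147 by simp [T147]) (by simp [T236])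
@[simp] lemma ne_T147_T256 : T147 ≠ T256 :=
  ne_of_mem_of_not_mem' (show pt 1 ∈ T147 by simp [T147]) (by simp [T256])
@[simp] lemma ne_T147_T257 : T147 ≠ T257 :=
  ne_of_mem_of_not_mem' (show pt 1 ∈ T147 by simp [T147]) (by simp [T257])
@[simp] lemma ne_T236_T036 : T236 ≠ T036 :=
  ne_of_mem_of_not_mem' (show pt 2 ∈ T236 by simp [T236]) (by simp [T036])
@[simp] lemma ne_T236_T038 : T236 ≠ T038 :=
  ne_of_mem_of_not_mem' (show pt 2 ∈ T236 by simp [T236]) (by simp [T038])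
@[simp] lemma ne_T236_T048 : T236 ≠ T048 :=
  ne_of_mem_of_not_mem' (show pt 2 ∈ T236 by simp [T236]) (by simp [T048])
@[simp] lemma ne_T236_T137 : T236 ≠ T137 :=
  ne_of_mem_of_not_mem' (show pt 2 ∈ T236 by simp [T236]) (by simp [T137])
@[simp] lemma ne_T236_T146 : T236 ≠ T146 :=
  ne_of_mem_of_not_mem' (show pt 2 ∈ T236 by simp [T236]) (by simp [T146])
@[simp] lemma ne_T236_T147 : T236 ≠ T147 :=
  ne_of_mem_of_not_mem' (show pt 2 ∈ T236 by simp [T236]) (by simp [T147])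
@[simp] lemma ne_T236_T256 : T236 ≠ T256 :=
  ne_of_mem_of_not_mem' (show pt 3 ∈ T236 by simp [T236]) (by simp [T256])
@[simp] lemma ne_T236_T257 : T236 ≠ T257 :=
  ne_of_mem_of_not_mem' (show pt 3 ∈ T236 by simp [T236]) (by simp [T257])
@[simp] lemma ne_T256_T036 : T256 ≠ T036 :=
  ne_of_mem_of_not_mem' (show pt 2 ∈ T256 by simp [T256]) (by simp [T036])
@[simp] lemma ne_T256_T038 : T256 ≠ T038 :=
  ne_of_mem_of_not_mem' (show pt 2 ∈ T256 by simp [T256]) (by simp [T038])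
@[simp] lemma ne_T256_T048 : T256 ≠ T048 :=
  ne_of_mem_of_not_mem' (show pt 2 ∈ T256 by simp [T256]) (by simp [T048])
@[simp] lemma ne_T256_T137 : T256 ≠ T137 :=
  ne_of_mem_of_not_mem' (show pt 2 ∈ T256 by simp [T256]) (by simp [T137])
@[simp] lemma ne_T256_T146 : T256 ≠ T146 :=
  ne_of_mem_of_not_mem' (show pt 2 ∈ T256 by simp [T256]) (by simp [T146])
@[simp] lemma ne_T256_T147 : T256 ≠ T147 :=
  ne_of_mem_of_not_mem' (show pt 2 ∈ T256 by simp [T256]) (by simp [T147])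
@[simp] lemma ne_T256_T236 : T256 ≠ T236 :=
  ne_of_mem_of_not_mem' (show pt 5 ∈ T256 by simp [T256]) (by simp [T236])
@[simp] lemma ne_T256_T257 : T256 ≠ T257 :=
  ne_of_mem_of_not_mem' (show pt 6 ∈ T256 by simp [T256]) (by simp [T257])
@[simp] lemma ne_T257_T036 : T257 ≠ T036 :=
  ne_of_mem_of_not_mem' (show pt 2 ∈ T257 by simp [T257]) (by simp [T036])
@[simp] lemma ne_T257_T038 : T257 ≠ T038 :=
  ne_of_mem_of_not_mem' (show pt 2 ∈ T257 by simp [T257]) (by simp [T038])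
@[simp] lemma ne_T257_T048 : T257 ≠ T048 :=
  ne_of_mem_of_not_mem' (show pt 2 ∈ T257 by simp [T257]) (by simp [T048])
@[simp] lemma ne_T257_T137 : T257 ≠ T137 :=
  ne_of_mem_of_not_mem' (show pt 2 ∈ T257 by simp [T257]) (by simp [T137])
@[simp] lemma ne_T257_T146 : T257 ≠ T146 :=
  ne_of_mem_of_not_mem' (show pt 2 ∈ T257 by simp [T257]) (by simp [T146])
@[simp] lemma ne_T257_T147 : T257 ≠ T147 :=
  ne_of_mem_of_not_mem' (show pt 2 ∈ T257 by simp [T257]) (by simp [T147])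
@[simp] lemma ne_T257_T236 : T257 ≠ T236 :=
  ne_of_mem_of_not_mem' (show pt 5 ∈ T257 by simp [T257]) (by simp [T236])
@[simp] lemma ne_T257_T256 : T257 ≠ T256 :=
  ne_of_mem_of_not_mem' (show pt 7 ∈ T257 by simp [T257]) (by simp [T256])

lemma card_T036 : (T036).card = 3 := by
  rw [show T036 = {pt 0, pt 3, pt 6} from rfl, Finset.card_insert_of_notMem (by simp),
    Finset.card_insert_of_notMem (by simp), Finset.card_singleton]
lemma card_T038 : (T038).card = 3 := by
  rw [show T038 = {pt 0, pt 3, pt 8} from rfl, Finset.card_insert_of_notMem (by simp),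
    Finset.card_insert_of_notMem (by simp), Finset.card_singleton]
lemma card_T048 : (T048).card = 3 := by
  rw [show T048 = {pt 0, pt 4, pt 8} from rfl, Finset.card_insert_of_notMem (by simp),
    Finset.card_insert_of_notMem (by simp), Finset.card_singleton]
lemma card_T137 : (T137).card = 3 := by
  rw [show T137 = {pt 1, pt 3, pt 7} from rfl, Finset.card_insert_of_notMem (by simp),
    Finset.card_insert_of_notMem (by simp), Finset.card_singleton]
lemma card_T146 : (T146).card = 3 := by
  rw [show T146 = {pt 1, pt 4, pt 6} from rfl, Finset.card_insert_of_notMem (by simp),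
    Finset.card_insert_of_notMem (by simp), Finset.card_singleton]
lemma card_T147 : (T147).card = 3 := by
  rw [show T147 = {pt 1, pt 4, pt 7} from rfl, Finset.card_insert_of_notMem (by simp),
    Finset.card_insert_of_notMem (by simp), Finset.card_singleton]
lemma card_T236 : (T236).card = 3 := by
  rw [show T236 = {pt 2, pt 3, pt 6} from rfl, Finset.card_insert_of_notMem (by simp),
    Finset.card_insert_of_notMem (by simp), Finset.card_singleton]
lemma card_T256 : (T256).card = 3 := by
  rw [show T256 = {pt 2, pt 5, pt 6} from rfl, Finset.card_insert_of_notMem (by simp),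
    Finset.card_insert_of_notMem (by simp), Finset.card_singleton]
lemma card_T257 : (T257).card = 3 := by
  rw [show T257 = {pt 2, pt 5, pt 7} from rfl, Finset.card_insert_of_notMem (by simp),
    Finset.card_insert_of_notMem (by simp), Finset.card_singleton]

lemma col_T036 : ∀ i : Fin 3, (T036 ∩ Ccfg i).card = 1 := by
  intro i; fin_cases i
  · show (T036 ∩ Ccfg 0).card = 1
    rw [hC0]
    simp [T036, Finset.insert_inter_of_mem, Finset.insert_inter_of_notMem,
      Finset.singleton_inter_of_notMem, Finset.singleton_inter_of_mem]
  · show (T036 ∩ Ccfg 1).card = 1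
    rw [hC1]
    simp [T036, Finset.insert_inter_of_mem, Finset.insert_inter_of_notMem,
      Finset.singleton_inter_of_notMem, Finset.singleton_inter_of_mem]
  · show (T036 ∩ Ccfg 2).card = 1
    rw [hC2]
    simp [T036, Finset.insert_inter_of_mem, Finset.insert_inter_of_notMem,
      Finset.singleton_inter_of_notMem, Finset.singleton_inter_of_mem]
lemma col_T038 : ∀ i : Fin 3, (T038 ∩ Ccfg i).card = 1 := by
  intro i; fin_cases i
  · show (T038 ∩ Ccfg 0).card = 1
    rw [hC0]
    simp [T038, Finset.insert_inter_of_mem, Finset.insert_inter_of_notMem,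
      Finset.singleton_inter_of_notMem, Finset.singleton_inter_of_mem]
  · show (T038 ∩ Ccfg 1).card = 1
    rw [hC1]
    simp [T038, Finset.insert_inter_of_mem, Finset.insert_inter_of_notMem,
      Finset.singleton_inter_of_notMem, Finset.singleton_inter_of_mem]
  · show (T038 ∩ Ccfg 2).card = 1
    rw [hC2]
    simp [T038, Finset.insert_inter_of_mem, Finset.insert_inter_of_notMem,
      Finset.singleton_inter_of_notMem, Finset.singleton_inter_of_mem]
lemma col_T048 : ∀ i : Fin 3, (T048 ∩ Ccfg i).card = 1 := by
  intro i; fin_cases i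
  · show (T048 ∩ Ccfg 0).card = 1
    rw [hC0]
    simp [T048, Finset.insert_inter_of_mem, Finset.insert_inter_of_notMem,
      Finset.singleton_inter_of_notMem, Finset.singleton_inter_of_mem]
  · show (T048 ∩ Ccfg 1).card = 1
    rw [hC1]
    simp [T048, Finset.insert_inter_of_mem, Finset.insert_inter_of_notMem,
      Finset.singleton_inter_of_notMem, Finset.singleton_inter_of_mem]
  · show (T048 ∩ Ccfg 2).card = 1
    rw [hC2]
    simp [T048, Finset.insert_inter_of_mem, Finset.insert_inter_of_notMem,
      Finset.singleton_inter_of_notMem, Finset.singleton_inter_of_mem]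
lemma col_T137 : ∀ i : Fin 3, (T137 ∩ Ccfg i).card = 1 := by
  intro i; fin_cases i
  · show (T137 ∩ Ccfg 0).card = 1
    rw [hC0]
    simp [T137, Finset.insert_inter_of_mem, Finset.insert_inter_of_notMem,
      Finset.singleton_inter_of_notMem, Finset.singleton_inter_of_mem]
  · show (T137 ∩ Ccfg 1).card = 1
    rw [hC1]
    simp [T137, Finset.insert_inter_of_mem, Finset.insert_inter_of_notMem,
      Finset.singleton_inter_of_notMem, Finset.singleton_inter_of_mem]
  · show (T137 ∩ Ccfg 2).card = 1
    rw [hC2]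
    simp [T137, Finset.insert_inter_of_mem, Finset.insert_inter_of_notMem,
      Finset.singleton_inter_of_notMem, Finset.singleton_inter_of_mem]
lemma col_T146 : ∀ i : Fin 3, (T146 ∩ Ccfg i).card = 1 := by
  intro i; fin_cases i
  · show (T146 ∩ Ccfg 0).card = 1
    rw [hC0]
    simp [T146, Finset.insert_inter_of_mem, Finset.insert_inter_of_notMem,
      Finset.singleton_inter_of_notMem, Finset.singleton_inter_of_mem]
  · show (T146 ∩ Ccfg 1).card = 1
    rw [hC1]
    simp [T146, Finset.insert_inter_of_mem, Finset.insert_inter_of_notMem,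
      Finset.singleton_inter_of_notMem, Finset.singleton_inter_of_mem]
  · show (T146 ∩ Ccfg 2).card = 1
    rw [hC2]
    simp [T146, Finset.insert_inter_of_mem, Finset.insert_inter_of_notMem,
      Finset.singleton_inter_of_notMem, Finset.singleton_inter_of_mem]
lemma col_T147 : ∀ i : Fin 3, (T147 ∩ Ccfg i).card = 1 := by
  intro i; fin_cases i
  · show (T147 ∩ Ccfg 0).card = 1
    rw [hC0]
    simp [T147, Finset.insert_inter_of_mem, Finset.insert_inter_of_notMem,
      Finset.singleton_inter_of_notMem, Finset.singleton_inter_of_mem]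
  · show (T147 ∩ Ccfg 1).card = 1
    rw [hC1]
    simp [T147, Finset.insert_inter_of_mem, Finset.insert_inter_of_notMem,
      Finset.singleton_inter_of_notMem, Finset.singleton_inter_of_mem]
  · show (T147 ∩ Ccfg 2).card = 1
    rw [hC2]
    simp [T147, Finset.insert_inter_of_mem, Finset.insert_inter_of_notMem,
      Finset.singleton_inter_of_notMem, Finset.singleton_inter_of_mem]
lemma col_T236 : ∀ i : Fin 3, (T236 ∩ Ccfg i).card = 1 := by
  intro i; fin_cases i
  · show (T236 ∩ Ccfg 0).card = 1
    rw [hC0]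
    simp [T236, Finset.insert_inter_of_mem, Finset.insert_inter_of_notMem,
      Finset.singleton_inter_of_notMem, Finset.singleton_inter_of_mem]
  · show (T236 ∩ Ccfg 1).card = 1
    rw [hC1]
    simp [T236, Finset.insert_inter_of_mem, Finset.insert_inter_of_notMem,
      Finset.singleton_inter_of_notMem, Finset.singleton_inter_of_mem]
  · show (T236 ∩ Ccfg 2).card = 1
    rw [hC2]
    simp [T236, Finset.insert_inter_of_mem, Finset.insert_inter_of_notMem,
      Finset.singleton_inter_of_notMem, Finset.singleton_inter_of_mem]
lemma col_T256 : ∀ i : Fin 3, (T256 ∩ Ccfg i).card = 1 := by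
  intro i; fin_cases i
  · show (T256 ∩ Ccfg 0).card = 1
    rw [hC0]
    simp [T256, Finset.insert_inter_of_mem, Finset.insert_inter_of_notMem,
      Finset.singleton_inter_of_notMem, Finset.singleton_inter_of_mem]
  · show (T256 ∩ Ccfg 1).card = 1
    rw [hC1]
    simp [T256, Finset.insert_inter_of_mem, Finset.insert_inter_of_notMem,
      Finset.singleton_inter_of_notMem, Finset.singleton_inter_of_mem]
  · show (T256 ∩ Ccfg 2).card = 1
    rw [hC2]
    simp [T256, Finset.insert_inter_of_mem, Finset.insert_inter_of_notMem,
      Finset.singleton_inter_of_notMem, Finset.singleton_inter_of_mem]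
lemma col_T257 : ∀ i : Fin 3, (T257 ∩ Ccfg i).card = 1 := by
  intro i; fin_cases i
  · show (T257 ∩ Ccfg 0).card = 1
    rw [hC0]
    simp [T257, Finset.insert_inter_of_mem, Finset.insert_inter_of_notMem,
      Finset.singleton_inter_of_notMem, Finset.singleton_inter_of_mem]
  · show (T257 ∩ Ccfg 1).card = 1
    rw [hC1]
    simp [T257, Finset.insert_inter_of_mem, Finset.insert_inter_of_notMem,
      Finset.singleton_inter_of_notMem, Finset.singleton_inter_of_mem]
  · show (T257 ∩ Ccfg 2).card = 1
    rw [hC2]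
    simp [T257, Finset.insert_inter_of_mem, Finset.insert_inter_of_notMem,
      Finset.singleton_inter_of_notMem, Finset.singleton_inter_of_mem]

lemma hull_T036 : pt 9 ∈ convexHull ℝ ((T036 : Finset (Fin 2 → ℝ)) : Set (Fin 2 → ℝ)) := by
  rw [hp0, show ((T036 : Finset (Fin 2 → ℝ)) : Set (Fin 2 → ℝ)) = {pt 0, pt 3, pt 6} from by simp [T036]]
  exact zero_mem_hull _ _ _ (17/77) (5/11) (25/77) (by norm_num) (by norm_num)
    (by norm_num) (by norm_num) (by norm_num) (by norm_num)
lemma hull_T038 : pt 9 ∈ convexHull ℝ ((T038 : Finset (Fin 2 → ℝ)) : Set (Fin 2 → ℝ)) := by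
  rw [hp0, show ((T038 : Finset (Fin 2 → ℝ)) : Set (Fin 2 → ℝ)) = {pt 0, pt 3, pt 8} from by simp [T038]]
  exact zero_mem_hull _ _ _ (7/17) (5/51) (25/51) (by norm_num) (by norm_num)
    (by norm_num) (by norm_num) (by norm_num) (by norm_num)
lemma hull_T048 : pt 9 ∈ convexHull ℝ ((T048 : Finset (Fin 2 → ℝ)) : Set (Fin 2 → ℝ)) := by
  rw [hp0, show ((T048 : Finset (Fin 2 → ℝ)) : Set (Fin 2 → ℝ)) = {pt 0, pt 4, pt 8} from by simp [T048]]
  exact zero_mem_hull _ _ _ (19/49) (5/98) (55/98) (by norm_num) (by norm_num)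
    (by norm_num) (by norm_num) (by norm_num) (by norm_num)
lemma hull_T137 : pt 9 ∈ convexHull ℝ ((T137 : Finset (Fin 2 → ℝ)) : Set (Fin 2 → ℝ)) := by
  rw [hp0, show ((T137 : Finset (Fin 2 → ℝ)) : Set (Fin 2 → ℝ)) = {pt 1, pt 3, pt 7} from by simp [T137]]
  exact zero_mem_hull _ _ _ (3/41) (13/41) (25/41) (by norm_num) (by norm_num)
    (by norm_num) (by norm_num) (by norm_num) (by norm_num)
lemma hull_T146 : pt 9 ∈ convexHull ℝ ((T146 : Finset (Fin 2 → ℝ)) : Set (Fin 2 → ℝ)) := by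
  rw [hp0, show ((T146 : Finset (Fin 2 → ℝ)) : Set (Fin 2 → ℝ)) = {pt 1, pt 4, pt 6} from by simp [T146]]
  exact zero_mem_hull _ _ _ (5/13) (9/26) (7/26) (by norm_num) (by norm_num)
    (by norm_num) (by norm_num) (by norm_num) (by norm_num)
lemma hull_T147 : pt 9 ∈ convexHull ℝ ((T147 : Finset (Fin 2 → ℝ)) : Set (Fin 2 → ℝ)) := by
  rw [hp0, show ((T147 : Finset (Fin 2 → ℝ)) : Set (Fin 2 → ℝ)) = {pt 1, pt 4, pt 7} from by simp [T147]]
  exact zero_mem_hull _ _ _ (23/50) (13/50) (7/25) (by norm_num) (by norm_num)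
    (by norm_num) (by norm_num) (by norm_num) (by norm_num)
lemma hull_T236 : pt 9 ∈ convexHull ℝ ((T236 : Finset (Fin 2 → ℝ)) : Set (Fin 2 → ℝ)) := by
  rw [hp0, show ((T236 : Finset (Fin 2 → ℝ)) : Set (Fin 2 → ℝ)) = {pt 2, pt 3, pt 6} from by simp [T236]]
  exact zero_mem_hull _ _ _ (17/28) (5/28) (3/14) (by norm_num) (by norm_num)
    (by norm_num) (by norm_num) (by norm_num) (by norm_num)
lemma hull_T256 : pt 9 ∈ convexHull ℝ ((T256 : Finset (Fin 2 → ℝ)) : Set (Fin 2 → ℝ)) := by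
  rw [hp0, show ((T256 : Finset (Fin 2 → ℝ)) : Set (Fin 2 → ℝ)) = {pt 2, pt 5, pt 6} from by simp [T256]]
  exact zero_mem_hull _ _ _ (34/41) (5/41) (2/41) (by norm_num) (by norm_num)
    (by norm_num) (by norm_num) (by norm_num) (by norm_num)
lemma hull_T257 : pt 9 ∈ convexHull ℝ ((T257 : Finset (Fin 2 → ℝ)) : Set (Fin 2 → ℝ)) := by
  rw [hp0, show ((T257 : Finset (Fin 2 → ℝ)) : Set (Fin 2 → ℝ)) = {pt 2, pt 5, pt 7} from by simp [T257]]
  exact zero_mem_hull _ _ _ (16/21) (1/7) (2/21) (by norm_num) (by norm_num)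
    (by norm_num) (by norm_num) (by norm_num) (by norm_num)

lemma nothull_037 : (0 : Fin 2 → ℝ) ∉ convexHull ℝ ({pt 0, pt 3, pt 7} : Set (Fin 2 → ℝ)) :=
  zero_not_mem_hull _ _ _ (4) (1) (by norm_num) (by norm_num) (by norm_num)
lemma nothull_046 : (0 : Fin 2 → ℝ) ∉ convexHull ℝ ({pt 0, pt 4, pt 6} : Set (Fin 2 → ℝ)) :=
  zero_not_mem_hull _ _ _ (1) (-1) (by norm_num) (by norm_num) (by norm_num)
lemma nothull_047 : (0 : Fin 2 → ℝ) ∉ convexHull ℝ ({pt 0, pt 4, pt 7} : Set (Fin 2 → ℝ)) :=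
  zero_not_mem_hull _ _ _ (1) (0) (by norm_num) (by norm_num) (by norm_num)
lemma nothull_056 : (0 : Fin 2 → ℝ) ∉ convexHull ℝ ({pt 0, pt 5, pt 6} : Set (Fin 2 → ℝ)) :=
  zero_not_mem_hull _ _ _ (-1) (-2) (by norm_num) (by norm_num) (by norm_num)
lemma nothull_057 : (0 : Fin 2 → ℝ) ∉ convexHull ℝ ({pt 0, pt 5, pt 7} : Set (Fin 2 → ℝ)) :=
  zero_not_mem_hull _ _ _ (-1) (-2) (by norm_num) (by norm_num) (by norm_num)
lemma nothull_058 : (0 : Fin 2 → ℝ) ∉ convexHull ℝ ({pt 0, pt 5, pt 8} : Set (Fin 2 → ℝ)) :=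
  zero_not_mem_hull _ _ _ (-4) (-5) (by norm_num) (by norm_num) (by norm_num)
lemma nothull_136 : (0 : Fin 2 → ℝ) ∉ convexHull ℝ ({pt 1, pt 3, pt 6} : Set (Fin 2 → ℝ)) :=
  zero_not_mem_hull _ _ _ (-1) (0) (by norm_num) (by norm_num) (by norm_num)
lemma nothull_138 : (0 : Fin 2 → ℝ) ∉ convexHull ℝ ({pt 1, pt 3, pt 8} : Set (Fin 2 → ℝ)) :=
  zero_not_mem_hull _ _ _ (-1) (0) (by norm_num) (by norm_num) (by norm_num)
lemma nothull_148 : (0 : Fin 2 → ℝ) ∉ convexHull ℝ ({pt 1, pt 4, pt 8} : Set (Fin 2 → ℝ)) :=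
  zero_not_mem_hull _ _ _ (-1) (2) (by norm_num) (by norm_num) (by norm_num)
lemma nothull_156 : (0 : Fin 2 → ℝ) ∉ convexHull ℝ ({pt 1, pt 5, pt 6} : Set (Fin 2 → ℝ)) :=
  zero_not_mem_hull _ _ _ (-1) (0) (by norm_num) (by norm_num) (by norm_num)
lemma nothull_157 : (0 : Fin 2 → ℝ) ∉ convexHull ℝ ({pt 1, pt 5, pt 7} : Set (Fin 2 → ℝ)) :=
  zero_not_mem_hull _ _ _ (-1) (-1) (by norm_num) (by norm_num) (by norm_num)
lemma nothull_158 : (0 : Fin 2 → ℝ) ∉ convexHull ℝ ({pt 1, pt 5, pt 8} : Set (Fin 2 → ℝ)) :=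
  zero_not_mem_hull _ _ _ (-1) (0) (by norm_num) (by norm_num) (by norm_num)
lemma nothull_237 : (0 : Fin 2 → ℝ) ∉ convexHull ℝ ({pt 2, pt 3, pt 7} : Set (Fin 2 → ℝ)) :=
  zero_not_mem_hull _ _ _ (4) (1) (by norm_num) (by norm_num) (by norm_num)
lemma nothull_238 : (0 : Fin 2 → ℝ) ∉ convexHull ℝ ({pt 2, pt 3, pt 8} : Set (Fin 2 → ℝ)) :=
  zero_not_mem_hull _ _ _ (1) (2) (by norm_num) (by norm_num) (by norm_num)
lemma nothull_246 : (0 : Fin 2 → ℝ) ∉ convexHull ℝ ({pt 2, pt 4, pt 6} : Set (Fin 2 → ℝ)) :=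
  zero_not_mem_hull _ _ _ (1) (-1) (by norm_num) (by norm_num) (by norm_num)
lemma nothull_247 : (0 : Fin 2 → ℝ) ∉ convexHull ℝ ({pt 2, pt 4, pt 7} : Set (Fin 2 → ℝ)) :=
  zero_not_mem_hull _ _ _ (1) (0) (by norm_num) (by norm_num) (by norm_num)
lemma nothull_248 : (0 : Fin 2 → ℝ) ∉ convexHull ℝ ({pt 2, pt 4, pt 8} : Set (Fin 2 → ℝ)) :=
  zero_not_mem_hull _ _ _ (1) (2) (by norm_num) (by norm_num) (by norm_num)
lemma nothull_258 : (0 : Fin 2 → ℝ) ∉ convexHull ℝ ({pt 2, pt 5, pt 8} : Set (Fin 2 → ℝ)) :=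
  zero_not_mem_hull _ _ _ (1) (4) (by norm_num) (by norm_num) (by norm_num)

noncomputable def Pp1 : Finset (Finset (Fin 2 → ℝ)) := {T038, T146, T257}
noncomputable def Pp2 : Finset (Finset (Fin 2 → ℝ)) := {T038, T147, T256}
noncomputable def Pp3 : Finset (Finset (Fin 2 → ℝ)) := {T048, T137, T256}

lemma card_Pp1 : (Pp1).card = 3 := by
  rw [show Pp1 = {T038, T146, T257} from rfl,
    Finset.card_insert_of_notMem (by simp), Finset.card_insert_of_notMem (by simp),
    Finset.card_singleton]
lemma card_Pp2 : (Pp2).card = 3 := by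
  rw [show Pp2 = {T038, T147, T256} from rfl,
    Finset.card_insert_of_notMem (by simp), Finset.card_insert_of_notMem (by simp),
    Finset.card_singleton]
lemma card_Pp3 : (Pp3).card = 3 := by
  rw [show Pp3 = {T048, T137, T256} from rfl,
    Finset.card_insert_of_notMem (by simp), Finset.card_insert_of_notMem (by simp),
    Finset.card_singleton]

lemma disj_T038_T146 : Disjoint T038 T146 := by
  rw [show T038 = {pt 0, pt 3, pt 8} from rfl, show T146 = {pt 1, pt 4, pt 6} from rfl]
  exact disj3 (by simp) (by simp) (by simp)
lemma disj_T038_T147 : Disjoint T038 T147 := by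
  rw [show T038 = {pt 0, pt 3, pt 8} from rfl, show T147 = {pt 1, pt 4, pt 7} from rfl]
  exact disj3 (by simp) (by simp) (by simp)
lemma disj_T038_T256 : Disjoint T038 T256 := by
  rw [show T038 = {pt 0, pt 3, pt 8} from rfl, show T256 = {pt 2, pt 5, pt 6} from rfl]
  exact disj3 (by simp) (by simp) (by simp)
lemma disj_T038_T257 : Disjoint T038 T257 := by
  rw [show T038 = {pt 0, pt 3, pt 8} from rfl, show T257 = {pt 2, pt 5, pt 7} from rfl]
  exact disj3 (by simp) (by simp) (by simp)
lemma disj_T048_T137 : Disjoint T048 T137 := by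
  rw [show T048 = {pt 0, pt 4, pt 8} from rfl, show T137 = {pt 1, pt 3, pt 7} from rfl]
  exact disj3 (by simp) (by simp) (by simp)
lemma disj_T048_T256 : Disjoint T048 T256 := by
  rw [show T048 = {pt 0, pt 4, pt 8} from rfl, show T256 = {pt 2, pt 5, pt 6} from rfl]
  exact disj3 (by simp) (by simp) (by simp)
lemma disj_T137_T256 : Disjoint T137 T256 := by
  rw [show T137 = {pt 1, pt 3, pt 7} from rfl, show T256 = {pt 2, pt 5, pt 6} from rfl]
  exact disj3 (by simp) (by simp) (by simp)
lemma disj_T146_T257 : Disjoint T146 T257 := by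
  rw [show T146 = {pt 1, pt 4, pt 6} from rfl, show T257 = {pt 2, pt 5, pt 7} from rfl]
  exact disj3 (by simp) (by simp) (by simp)
lemma disj_T147_T256 : Disjoint T147 T256 := by
  rw [show T147 = {pt 1, pt 4, pt 7} from rfl, show T256 = {pt 2, pt 5, pt 6} from rfl]
  exact disj3 (by simp) (by simp) (by simp)

lemma ne_Pp12 : Pp1 ≠ Pp2 :=
  ne_of_mem_of_not_mem' (show T146 ∈ Pp1 by simp [Pp1]) (by simp [Pp2])
lemma ne_Pp13 : Pp1 ≠ Pp3 :=
  ne_of_mem_of_not_mem' (show T038 ∈ Pp1 by simp [Pp1]) (by simp [Pp3])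
lemma ne_Pp23 : Pp2 ≠ Pp3 :=
  ne_of_mem_of_not_mem' (show T147 ∈ Pp2 by simp [Pp2]) (by simp [Pp3])

lemma hXcard : Xcfg.card = 9 := by
  rw [show Xcfg = {pt 0, pt 1, pt 2, pt 3, pt 4, pt 5, pt 6, pt 7, pt 8} from rfl,
    Finset.card_insert_of_notMem (by simp), Finset.card_insert_of_notMem (by simp),
    Finset.card_insert_of_notMem (by simp), Finset.card_insert_of_notMem (by simp),
    Finset.card_insert_of_notMem (by simp), Finset.card_insert_of_notMem (by simp),
    Finset.card_insert_of_notMem (by simp), Finset.card_insert_of_notMem (by simp),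
    Finset.card_singleton]

lemma hCcard : ∀ i : Fin 3, (Ccfg i).card = 3 := by
  intro i
  fin_cases i
  · show (Ccfg 0).card = 3
    rw [hC0, Finset.card_insert_of_notMem (by simp), Finset.card_insert_of_notMem (by simp),
      Finset.card_singleton]
  · show (Ccfg 1).card = 3
    rw [hC1, Finset.card_insert_of_notMem (by simp), Finset.card_insert_of_notMem (by simp),
      Finset.card_singleton]
  · show (Ccfg 2).card = 3
    rw [hC2, Finset.card_insert_of_notMem (by simp), Finset.card_insert_of_notMem (by simp),
      Finset.card_singleton]

lemma hCdisj : ∀ i j : Fin 3, i ≠ j → Disjoint (Ccfg i) (Ccfg j) := by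
  intro i j h
  fin_cases i <;> fin_cases j
  · exact absurd rfl h
  · show Disjoint (Ccfg 0) (Ccfg 1); rw [hC0, hC1]; exact disj3 (by simp) (by simp) (by simp)
  · show Disjoint (Ccfg 0) (Ccfg 2); rw [hC0, hC2]; exact disj3 (by simp) (by simp) (by simp)
  · show Disjoint (Ccfg 1) (Ccfg 0); rw [hC1, hC0]; exact disj3 (by simp) (by simp) (by simp)
  · exact absurd rfl h
  · show Disjoint (Ccfg 1) (Ccfg 2); rw [hC1, hC2]; exact disj3 (by simp) (by simp) (by simp)
  · show Disjoint (Ccfg 2) (Ccfg 0); rw [hC2, hC0]; exact disj3 (by simp) (by simp) (by simp)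
  · show Disjoint (Ccfg 2) (Ccfg 1); rw [hC2, hC1]; exact disj3 (by simp) (by simp) (by simp)
  · exact absurd rfl h

lemma hXbiUnion : Xcfg = Finset.univ.biUnion Ccfg := by
  ext w
  simp only [Finset.mem_biUnion, Finset.mem_univ, true_and]
  constructor
  · intro hw
    simp only [Xcfg, Finset.mem_insert, Finset.mem_singleton] at hw
    rcases hw with rfl | rfl | rfl | rfl | rfl | rfl | rfl | rfl | rfl
    · exact ⟨0, by rw [hC0]; simp⟩
    · exact ⟨0, by rw [hC0]; simp⟩
    · exact ⟨0, by rw [hC0]; simp⟩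
    · exact ⟨1, by rw [hC1]; simp⟩
    · exact ⟨1, by rw [hC1]; simp⟩
    · exact ⟨1, by rw [hC1]; simp⟩
    · exact ⟨2, by rw [hC2]; simp⟩
    · exact ⟨2, by rw [hC2]; simp⟩
    · exact ⟨2, by rw [hC2]; simp⟩
  · rintro ⟨i, hi⟩
    fin_cases i
    · replace hi : w ∈ Ccfg 0 := hi
      rw [hC0] at hi
      simp only [Finset.mem_insert, Finset.mem_singleton] at hi
      simp only [Xcfg, Finset.mem_insert, Finset.mem_singleton]
      tauto
    · replace hi : w ∈ Ccfg 1 := hi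
      rw [hC1] at hi
      simp only [Finset.mem_insert, Finset.mem_singleton] at hi
      simp only [Xcfg, Finset.mem_insert, Finset.mem_singleton]
      tauto
    · replace hi : w ∈ Ccfg 2 := hi
      rw [hC2] at hi
      simp only [Finset.mem_insert, Finset.mem_singleton] at hi
      simp only [Xcfg, Finset.mem_insert, Finset.mem_singleton]
      tauto

lemma hpnotX : pt 9 ∉ Xcfg := by simp [Xcfg]

lemma hXC : Xcfg = Ccfg 0 ∪ Ccfg 1 ∪ Ccfg 2 := by
  rw [hC0, hC1, hC2]
  ext w
  simp only [Xcfg, Finset.mem_insert, Finset.mem_singleton, Finset.mem_union]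
  tauto

lemma hgenpos : GenPos 2 ((Xcfg : Set (Fin 2 → ℝ)) ∪ {pt 9}) := by
  intro j hj S hSsub hScard
  rintro ⟨A, hA, hSA⟩
  have hidx : ∀ w ∈ S, ∃ i : Fin 10, w = pt i := by
    intro w hw
    rcases hSsub hw with h | h
    · simp only [Xcfg, Finset.coe_insert, Set.mem_insert_iff, Finset.coe_singleton,
        Set.mem_singleton_iff] at h
      rcases h with rfl | rfl | rfl | rfl | rfl | rfl | rfl | rfl | rfl
      exacts [⟨0, rfl⟩, ⟨1, rfl⟩, ⟨2, rfl⟩, ⟨3, rfl⟩, ⟨4, rfl⟩, ⟨5, rfl⟩, ⟨6, rfl⟩,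
        ⟨7, rfl⟩, ⟨8, rfl⟩]
    · exact ⟨9, h⟩
  interval_cases j
  · obtain ⟨x, y, hxy, rfl⟩ := Finset.card_eq_two.mp hScard
    exact hxy (eq_of_finrank_zero A hA (hSA (by simp)) (hSA (by simp)))
  · obtain ⟨x, y, z, hxy, hxz, hyz, rfl⟩ := Finset.card_eq_three.mp hScard
    obtain ⟨a, rfl⟩ := hidx x (by simp)
    obtain ⟨b, rfl⟩ := hidx y (by simp)
    obtain ⟨c, rfl⟩ := hidx z (by simp)
    have hab : a ≠ b := fun h => hxy (by rw [h])
    have hac : a ≠ c := fun h => hxz (by rw [h])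
    have hbc : b ≠ c := fun h => hyz (by rw [h])
    exact not_on_line A hA (hSA (by simp)) (hSA (by simp)) (hSA (by simp))
      (crossR a b c hab hac hbc)

lemma hset_eq : {P : Finset (Finset (Fin 2 → ℝ)) |
    P.card = 3 ∧
    (∀ B ∈ P, ∀ B' ∈ P, B ≠ B' → Disjoint B B') ∧
    P.biUnion id = Xcfg ∧
    ∀ B ∈ P, B.card = 3 ∧ (∀ i : Fin 3, (B ∩ Ccfg i).card = 1) ∧
      pt 9 ∈ convexHull ℝ (B : Set (Fin 2 → ℝ))} =
    ({Pp1, Pp2, Pp3} : Set (Finset (Finset (Fin 2 → ℝ)))) := by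
  ext P
  simp only [Set.mem_setOf_eq, Set.mem_insert_iff, Set.mem_singleton_iff]
  constructor
  · rintro ⟨hcard, hdisj, hunion, hblocks⟩
    have hdecomp : ∀ B ∈ P, ∃ x y z, x ∈ Ccfg 0 ∧ y ∈ Ccfg 1 ∧ z ∈ Ccfg 2 ∧ B = {x, y, z} := by
      intro B hB
      obtain ⟨hc3, hcols, hhull⟩ := hblocks B hB
      obtain ⟨x, hx⟩ := Finset.card_eq_one.mp (hcols 0)
      obtain ⟨y, hy⟩ := Finset.card_eq_one.mp (hcols 1)
      obtain ⟨z, hz⟩ := Finset.card_eq_one.mp (hcols 2)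
      have hBX : B ⊆ Xcfg := by
        rw [← hunion]
        exact Finset.subset_biUnion_of_mem id hB
      have hxm : x ∈ B ∩ Ccfg 0 := by rw [hx]; exact Finset.mem_singleton_self x
      have hym : y ∈ B ∩ Ccfg 1 := by rw [hy]; exact Finset.mem_singleton_self y
      have hzm : z ∈ B ∩ Ccfg 2 := by rw [hz]; exact Finset.mem_singleton_self z
      refine ⟨x, y, z, Finset.mem_of_mem_inter_right hxm, Finset.mem_of_mem_inter_right hym,
        Finset.mem_of_mem_inter_right hzm, ?_⟩
      have h1 : B = B ∩ Xcfg := (Finset.inter_eq_left.mpr hBX).symm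
      rw [hXC, Finset.inter_union_distrib_left, Finset.inter_union_distrib_left,
        hx, hy, hz] at h1
      rw [h1]
      ext w
      simp only [Finset.mem_union, Finset.mem_insert, Finset.mem_singleton]
      tauto
    have hGood : ∀ B ∈ P, B = T036 ∨ B = T038 ∨ B = T048 ∨ B = T137 ∨ B = T146 ∨
        B = T147 ∨ B = T236 ∨ B = T256 ∨ B = T257 := by
      intro B hB
      obtain ⟨x, y, z, hx, hy, hz, rfl⟩ := hdecomp B hB
      have hhull := (hblocks _ hB).2.2
      rw [hC0] at hx
      rw [hC1] at hy
      rw [hC2] at hz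
      simp only [Finset.mem_insert, Finset.mem_singleton] at hx hy hz
      have hcoe : ∀ a b c : Fin 2 → ℝ,
          (({a, b, c} : Finset (Fin 2 → ℝ)) : Set (Fin 2 → ℝ)) = {a, b, c} := by
        intro a b c; simp
      rcases hx with rfl | rfl | rfl <;> rcases hy with rfl | rfl | rfl <;>
        rcases hz with rfl | rfl | rfl
      · exact Or.inl rfl
      · rw [hcoe, hp0] at hhull
        exact absurd hhull nothull_037
      · exact Or.inr (Or.inl rfl)
      · rw [hcoe, hp0] at hhull
        exact absurd hhull nothull_046
      · rw [hcoe, hp0] at hhull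
        exact absurd hhull nothull_047
      · exact Or.inr (Or.inr (Or.inl rfl))
      · rw [hcoe, hp0] at hhull
        exact absurd hhull nothull_056
      · rw [hcoe, hp0] at hhull
        exact absurd hhull nothull_057
      · rw [hcoe, hp0] at hhull
        exact absurd hhull nothull_058
      · rw [hcoe, hp0] at hhull
        exact absurd hhull nothull_136
      · exact Or.inr (Or.inr (Or.inr (Or.inl rfl)))
      · rw [hcoe, hp0] at hhull
        exact absurd hhull nothull_138
      · exact Or.inr (Or.inr (Or.inr (Or.inr (Or.inl rfl))))
      · exact Or.inr (Or.inr (Or.inr (Or.inr (Or.inr (Or.inl rfl)))))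
      · rw [hcoe, hp0] at hhull
        exact absurd hhull nothull_148
      · rw [hcoe, hp0] at hhull
        exact absurd hhull nothull_156
      · rw [hcoe, hp0] at hhull
        exact absurd hhull nothull_157
      · rw [hcoe, hp0] at hhull
        exact absurd hhull nothull_158
      · exact Or.inr (Or.inr (Or.inr (Or.inr (Or.inr (Or.inr (Or.inl rfl))))))
      · rw [hcoe, hp0] at hhull
        exact absurd hhull nothull_237
      · rw [hcoe, hp0] at hhull
        exact absurd hhull nothull_238
      · rw [hcoe, hp0] at hhull
        exact absurd hhull nothull_246
      · rw [hcoe, hp0] at hhull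
        exact absurd hhull nothull_247
      · rw [hcoe, hp0] at hhull
        exact absurd hhull nothull_248
      · exact Or.inr (Or.inr (Or.inr (Or.inr (Or.inr (Or.inr (Or.inr (Or.inl rfl)))))))
      · exact Or.inr (Or.inr (Or.inr (Or.inr (Or.inr (Or.inr (Or.inr (Or.inr (rfl))))))))
      · rw [hcoe, hp0] at hhull
        exact absurd hhull nothull_258
    have hx0 : pt 0 ∈ P.biUnion id := by rw [hunion]; simp [Xcfg]
    have hx1 : pt 1 ∈ P.biUnion id := by rw [hunion]; simp [Xcfg]
    have hx2 : pt 2 ∈ P.biUnion id := by rw [hunion]; simp [Xcfg]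
    obtain ⟨B0, hB0P, hB0⟩ := Finset.mem_biUnion.mp hx0
    obtain ⟨B1, hB1P, hB1⟩ := Finset.mem_biUnion.mp hx1
    obtain ⟨B2, hB2P, hB2⟩ := Finset.mem_biUnion.mp hx2
    simp only [id_eq] at hB0 hB1 hB2
    have hG0 : B0 = T036 ∨ B0 = T038 ∨ B0 = T048 := by
      rcases hGood B0 hB0P with rfl | rfl | rfl | rfl | rfl | rfl | rfl | rfl | rfl
      · exact Or.inl rfl
      · exact Or.inr (Or.inl rfl)
      · exact Or.inr (Or.inr (rfl))
      · exact absurd hB0 (by simp [T137])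
      · exact absurd hB0 (by simp [T146])
      · exact absurd hB0 (by simp [T147])
      · exact absurd hB0 (by simp [T236])
      · exact absurd hB0 (by simp [T256])
      · exact absurd hB0 (by simp [T257])
    have hG1 : B1 = T137 ∨ B1 = T146 ∨ B1 = T147 := by
      rcases hGood B1 hB1P with rfl | rfl | rfl | rfl | rfl | rfl | rfl | rfl | rfl
      · exact absurd hB1 (by simp [T036])
      · exact absurd hB1 (by simp [T038])
      · exact absurd hB1 (by simp [T048])
      · exact Or.inl rfl
      · exact Or.inr (Or.inl rfl)
      · exact Or.inr (Or.inr (rfl))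
      · exact absurd hB1 (by simp [T236])
      · exact absurd hB1 (by simp [T256])
      · exact absurd hB1 (by simp [T257])
    have hG2 : B2 = T236 ∨ B2 = T256 ∨ B2 = T257 := by
      rcases hGood B2 hB2P with rfl | rfl | rfl | rfl | rfl | rfl | rfl | rfl | rfl
      · exact absurd hB2 (by simp [T036])
      · exact absurd hB2 (by simp [T038])
      · exact absurd hB2 (by simp [T048])
      · exact absurd hB2 (by simp [T137])
      · exact absurd hB2 (by simp [T146])
      · exact absurd hB2 (by simp [T147])
      · exact Or.inl rfl
      · exact Or.inr (Or.inl rfl)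
      · exact Or.inr (Or.inr (rfl))
    rcases hG0 with rfl | rfl | rfl
    · rcases hG1 with rfl | rfl | rfl
      · -- T036 vs T137 share pt 3
        exact absurd (show pt 3 ∈ T137 by simp [T137])
          (Finset.disjoint_left.mp (hdisj _ hB0P _ hB1P (by simp)) (show pt 3 ∈ T036 by simp [T036]))
      · -- T036 vs T146 share pt 6
        exact absurd (show pt 6 ∈ T146 by simp [T146])
          (Finset.disjoint_left.mp (hdisj _ hB0P _ hB1P (by simp)) (show pt 6 ∈ T036 by simp [T036]))
      · rcases hG2 with rfl | rfl | rfl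
        · -- T036 vs T236 share pt 3
          exact absurd (show pt 3 ∈ T236 by simp [T236])
            (Finset.disjoint_left.mp (hdisj _ hB0P _ hB2P (by simp)) (show pt 3 ∈ T036 by simp [T036]))
        · -- T036 vs T256 share pt 6
          exact absurd (show pt 6 ∈ T256 by simp [T256])
            (Finset.disjoint_left.mp (hdisj _ hB0P _ hB2P (by simp)) (show pt 6 ∈ T036 by simp [T036]))
        · -- T147 vs T257 share pt 7
          exact absurd (show pt 7 ∈ T257 by simp [T257])
            (Finset.disjoint_left.mp (hdisj _ hB1P _ hB2P (by simp)) (show pt 7 ∈ T147 by simp [T147]))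
    · rcases hG1 with rfl | rfl | rfl
      · -- T038 vs T137 share pt 3
        exact absurd (show pt 3 ∈ T137 by simp [T137])
          (Finset.disjoint_left.mp (hdisj _ hB0P _ hB1P (by simp)) (show pt 3 ∈ T038 by simp [T038]))
      · rcases hG2 with rfl | rfl | rfl
        · -- T038 vs T236 share pt 3
          exact absurd (show pt 3 ∈ T236 by simp [T236])
            (Finset.disjoint_left.mp (hdisj _ hB0P _ hB2P (by simp)) (show pt 3 ∈ T038 by simp [T038]))
        · -- T146 vs T256 share pt 6
          exact absurd (show pt 6 ∈ T256 by simp [T256])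
            (Finset.disjoint_left.mp (hdisj _ hB1P _ hB2P (by simp)) (show pt 6 ∈ T146 by simp [T146]))
        · -- the partition Pp1
          have hsub : Pp1 ⊆ P := by
            intro B hB
            simp only [Pp1, Finset.mem_insert, Finset.mem_singleton] at hB
            rcases hB with rfl | rfl | rfl
            exacts [hB0P, hB1P, hB2P]
          have hPeq : P = Pp1 :=
            (Finset.eq_of_subset_of_card_le hsub (by simp [hcard, card_Pp1])).symm
          exact Or.inl hPeq
      · rcases hG2 with rfl | rfl | rfl
        · -- T038 vs T236 share pt 3
          exact absurd (show pt 3 ∈ T236 by simp [T236])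
            (Finset.disjoint_left.mp (hdisj _ hB0P _ hB2P (by simp)) (show pt 3 ∈ T038 by simp [T038]))
        · -- the partition Pp2
          have hsub : Pp2 ⊆ P := by
            intro B hB
            simp only [Pp2, Finset.mem_insert, Finset.mem_singleton] at hB
            rcases hB with rfl | rfl | rfl
            exacts [hB0P, hB1P, hB2P]
          have hPeq : P = Pp2 :=
            (Finset.eq_of_subset_of_card_le hsub (by simp [hcard, card_Pp2])).symm
          exact Or.inr (Or.inl hPeq)
        · -- T147 vs T257 share pt 7
          exact absurd (show pt 7 ∈ T257 by simp [T257])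
            (Finset.disjoint_left.mp (hdisj _ hB1P _ hB2P (by simp)) (show pt 7 ∈ T147 by simp [T147]))
    · rcases hG1 with rfl | rfl | rfl
      · rcases hG2 with rfl | rfl | rfl
        · -- T137 vs T236 share pt 3
          exact absurd (show pt 3 ∈ T236 by simp [T236])
            (Finset.disjoint_left.mp (hdisj _ hB1P _ hB2P (by simp)) (show pt 3 ∈ T137 by simp [T137]))
        · -- the partition Pp3
          have hsub : Pp3 ⊆ P := by
            intro B hB
            simp only [Pp3, Finset.mem_insert, Finset.mem_singleton] at hB
            rcases hB with rfl | rfl | rfl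
            exacts [hB0P, hB1P, hB2P]
          have hPeq : P = Pp3 :=
            (Finset.eq_of_subset_of_card_le hsub (by simp [hcard, card_Pp3])).symm
          exact Or.inr (Or.inr (hPeq))
        · -- T137 vs T257 share pt 7
          exact absurd (show pt 7 ∈ T257 by simp [T257])
            (Finset.disjoint_left.mp (hdisj _ hB1P _ hB2P (by simp)) (show pt 7 ∈ T137 by simp [T137]))
      · -- T048 vs T146 share pt 4
        exact absurd (show pt 4 ∈ T146 by simp [T146])
          (Finset.disjoint_left.mp (hdisj _ hB0P _ hB1P (by simp)) (show pt 4 ∈ T048 by simp [T048]))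
      · -- T048 vs T147 share pt 4
        exact absurd (show pt 4 ∈ T147 by simp [T147])
          (Finset.disjoint_left.mp (hdisj _ hB0P _ hB1P (by simp)) (show pt 4 ∈ T048 by simp [T048]))
  · intro hP
    rcases hP with rfl | rfl | rfl
    · refine ⟨card_Pp1, ?_, ?_, ?_⟩
      · intro B hB B' hB' hne
        simp only [Pp1, Finset.mem_insert, Finset.mem_singleton] at hB hB'
        rcases hB with rfl | rfl | rfl <;> rcases hB' with rfl | rfl | rfl <;>
          first
          | exact absurd rfl hne
          | exact disj_T038_T146
          | exact disj_T038_T146.symm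
          | exact disj_T038_T257
          | exact disj_T038_T257.symm
          | exact disj_T146_T257
          | exact disj_T146_T257.symm
      · ext w
        simp only [Pp1, Finset.mem_biUnion, Finset.mem_insert, Finset.mem_singleton,
          id_eq, Xcfg]
        constructor
        · rintro ⟨B, (rfl | rfl | rfl), hw⟩ <;>
            simp only [T038, T146, T257, Finset.mem_insert,
              Finset.mem_singleton] at hw <;>
            tauto
        · intro hw
          rcases hw with rfl | rfl | rfl | rfl | rfl | rfl | rfl | rfl | rfl
          · exact ⟨T038, Or.inl rfl, by simp [T038]⟩
          · exact ⟨T146, Or.inr (Or.inl rfl), by simp [T146]⟩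
          · exact ⟨T257, Or.inr (Or.inr rfl), by simp [T257]⟩
          · exact ⟨T038, Or.inl rfl, by simp [T038]⟩
          · exact ⟨T146, Or.inr (Or.inl rfl), by simp [T146]⟩
          · exact ⟨T257, Or.inr (Or.inr rfl), by simp [T257]⟩
          · exact ⟨T146, Or.inr (Or.inl rfl), by simp [T146]⟩
          · exact ⟨T257, Or.inr (Or.inr rfl), by simp [T257]⟩
          · exact ⟨T038, Or.inl rfl, by simp [T038]⟩
      · intro B hB
        simp only [Pp1, Finset.mem_insert, Finset.mem_singleton] at hB
        rcases hB with rfl | rfl | rfl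
        · exact ⟨card_T038, col_T038, hull_T038⟩
        · exact ⟨card_T146, col_T146, hull_T146⟩
        · exact ⟨card_T257, col_T257, hull_T257⟩
    · refine ⟨card_Pp2, ?_, ?_, ?_⟩
      · intro B hB B' hB' hne
        simp only [Pp2, Finset.mem_insert, Finset.mem_singleton] at hB hB'
        rcases hB with rfl | rfl | rfl <;> rcases hB' with rfl | rfl | rfl <;>
          first
          | exact absurd rfl hne
          | exact disj_T038_T147
          | exact disj_T038_T147.symm
          | exact disj_T038_T256
          | exact disj_T038_T256.symm
          | exact disj_T147_T256
          | exact disj_T147_T256.symm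
      · ext w
        simp only [Pp2, Finset.mem_biUnion, Finset.mem_insert, Finset.mem_singleton,
          id_eq, Xcfg]
        constructor
        · rintro ⟨B, (rfl | rfl | rfl), hw⟩ <;>
            simp only [T038, T147, T256, Finset.mem_insert,
              Finset.mem_singleton] at hw <;>
            tauto
        · intro hw
          rcases hw with rfl | rfl | rfl | rfl | rfl | rfl | rfl | rfl | rfl
          · exact ⟨T038, Or.inl rfl, by simp [T038]⟩
          · exact ⟨T147, Or.inr (Or.inl rfl), by simp [T147]⟩
          · exact ⟨T256, Or.inr (Or.inr rfl), by simp [T256]⟩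
          · exact ⟨T038, Or.inl rfl, by simp [T038]⟩
          · exact ⟨T147, Or.inr (Or.inl rfl), by simp [T147]⟩
          · exact ⟨T256, Or.inr (Or.inr rfl), by simp [T256]⟩
          · exact ⟨T256, Or.inr (Or.inr rfl), by simp [T256]⟩
          · exact ⟨T147, Or.inr (Or.inl rfl), by simp [T147]⟩
          · exact ⟨T038, Or.inl rfl, by simp [T038]⟩
      · intro B hB
        simp only [Pp2, Finset.mem_insert, Finset.mem_singleton] at hB
        rcases hB with rfl | rfl | rfl
        · exact ⟨card_T038, col_T038, hull_T038⟩
        · exact ⟨card_T147, col_T147, hull_T147⟩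
        · exact ⟨card_T256, col_T256, hull_T256⟩
    · refine ⟨card_Pp3, ?_, ?_, ?_⟩
      · intro B hB B' hB' hne
        simp only [Pp3, Finset.mem_insert, Finset.mem_singleton] at hB hB'
        rcases hB with rfl | rfl | rfl <;> rcases hB' with rfl | rfl | rfl <;>
          first
          | exact absurd rfl hne
          | exact disj_T048_T137
          | exact disj_T048_T137.symm
          | exact disj_T048_T256
          | exact disj_T048_T256.symm
          | exact disj_T137_T256
          | exact disj_T137_T256.symm
      · ext w
        simp only [Pp3, Finset.mem_biUnion, Finset.mem_insert, Finset.mem_singleton,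
          id_eq, Xcfg]
        constructor
        · rintro ⟨B, (rfl | rfl | rfl), hw⟩ <;>
            simp only [T048, T137, T256, Finset.mem_insert,
              Finset.mem_singleton] at hw <;>
            tauto
        · intro hw
          rcases hw with rfl | rfl | rfl | rfl | rfl | rfl | rfl | rfl | rfl
          · exact ⟨T048, Or.inl rfl, by simp [T048]⟩
          · exact ⟨T137, Or.inr (Or.inl rfl), by simp [T137]⟩
          · exact ⟨T256, Or.inr (Or.inr rfl), by simp [T256]⟩
          · exact ⟨T137, Or.inr (Or.inl rfl), by simp [T137]⟩
          · exact ⟨T048, Or.inl rfl, by simp [T048]⟩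
          · exact ⟨T256, Or.inr (Or.inr rfl), by simp [T256]⟩
          · exact ⟨T256, Or.inr (Or.inr rfl), by simp [T256]⟩
          · exact ⟨T137, Or.inr (Or.inl rfl), by simp [T137]⟩
          · exact ⟨T048, Or.inl rfl, by simp [T048]⟩
      · intro B hB
        simp only [Pp3, Finset.mem_insert, Finset.mem_singleton] at hB
        rcases hB with rfl | rfl | rfl
        · exact ⟨card_T048, col_T048, hull_T048⟩
        · exact ⟨card_T137, col_T137, hull_T137⟩
        · exact ⟨card_T256, col_T256, hull_T256⟩

lemma hcount : cBP 2 3 (pt 9) Xcfg Ccfg = 3 := by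
  show Set.ncard {P : Finset (Finset (Fin 2 → ℝ)) |
    P.card = 3 ∧
    (∀ B ∈ P, ∀ B' ∈ P, B ≠ B' → Disjoint B B') ∧
    P.biUnion id = Xcfg ∧
    ∀ B ∈ P, B.card = 3 ∧ (∀ i : Fin 3, (B ∩ Ccfg i).card = 1) ∧
      pt 9 ∈ convexHull ℝ (B : Set (Fin 2 → ℝ))} = 3
  rw [hset_eq]
  exact Set.ncard_eq_three.mpr ⟨Pp1, Pp2, Pp3, ne_Pp12, ne_Pp13, ne_Pp23, rfl⟩

/-- There is a planar configuration of `9` points with three color classes of three points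
each, in general position together with the point `p`, having exactly `3` (an odd number
of) colored Birch partitions; so the hypothesis `k ≥ d + 2` in the evenness theorem cannot
be weakened to `k ≥ d + 1` for `d = 2`. -/
theorem exists_odd_cBP_dim_two :
    ∃ (p : Fin 2 → ℝ) (X : Finset (Fin 2 → ℝ)) (C : Fin 3 → Finset (Fin 2 → ℝ)),
      X.card = 9 ∧
      (∀ i : Fin 3, (C i).card = 3) ∧
      (∀ i j : Fin 3, i ≠ j → Disjoint (C i) (C j)) ∧
      X = Finset.univ.biUnion C ∧
      p ∉ X ∧
      GenPos 2 (↑X ∪ {p}) ∧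
      cBP 2 3 p X C = 3 := by
  exact ⟨pt 9, Xcfg, Ccfg, hXcard, hCcard, hCdisj, hXbiUnion, hpnotX, hgenpos, hcount⟩
end

section
/- Let d = 1 and let r ≥ 2 be a prime, N = 2(r−1). There exists an affine map f : Δ_N → ℝ on the standard N-simplex, with vertices colored with 3 colors with color classes satisfying |C_0| = |C_1| = r−1 and |C_2| = 1 and with the N+1 image points pairwise distinct, such that T(f) = ⌈(r−1)/2⌉! · ⌊(r−1)/2⌋!. That is, the lower bound T(f) ≥ ⌈(r−1)/2⌉! · ⌊(r−1)/2⌋! for d = 1 is optimal. -/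
open scoped Classical

/-! Put the vertices at `0, 1, …, 2m` on the real line, where `m = r - 1`. In a Tverberg
partition into `m + 1` blocks every block reaches both sides of the common point `y`; a count of
the points shows that `y` is the median vertex `m`, which forms a singleton block, while the other
`m` blocks each pair one of the `m` left vertices with one of the `m` right vertices. The left and
the right vertex with the same index `k` get opposite colours `0`/`1`, both according to whether
`k < ⌈m/2⌉`, so a pairing is rainbow exactly when it comes from a permutation of `Fin m`
preserving the two halves `k < ⌈m/2⌉` and `k ≥ ⌈m/2⌉`: there are `⌈m/2⌉! · ⌊m/2⌋!` of them. -/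

open Finset

section Line

variable {α : Type*}

lemma exists_le_of_mem_convexHull {s : Set ℝ} {y : ℝ} (h : y ∈ convexHull ℝ s) :
    ∃ a ∈ s, a ≤ y := by
  by_contra! hc
  exact lt_irrefl y (convexHull_min hc (convex_Ioi y) h)

lemma exists_ge_of_mem_convexHull {s : Set ℝ} {y : ℝ} (h : y ∈ convexHull ℝ s) :
    ∃ a ∈ s, y ≤ a := by
  by_contra! hc
  exact lt_irrefl y (convexHull_min hc (convex_Iio y) h)

lemma two_le_card_add_card_filter_eq_of_mem_convexHull {v : α → ℝ} {B : Finset α} {y : ℝ}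
    (h : y ∈ convexHull ℝ (v '' B)) : 2 ≤ #B + #(B.filter (v · = y)) := by
  obtain ⟨_, ⟨a, ha, rfl⟩, hay⟩ := exists_le_of_mem_convexHull h
  obtain ⟨_, ⟨b, hb, rfl⟩, hyb⟩ := exists_ge_of_mem_convexHull h
  rcases hay.eq_or_lt with hay | hay
  · have h1 : 0 < #B := card_pos.2 ⟨a, ha⟩
    have h2 : 0 < #(B.filter (v · = y)) := card_pos.2 ⟨a, mem_filter.2 ⟨ha, hay⟩⟩
    omega
  · have hab : a ≠ b := by rintro rfl; linarith
    have : #({a, b} : Finset α) ≤ #B := card_le_card (insert_subset ha (singleton_subset_iff.2 hb))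
    rw [card_pair hab] at this
    omega

lemma forall_card_filter_pair_le_one_iff {β : Type*} [DecidableEq α] [DecidableEq β]
    {x y : α} (hxy : x ≠ y) (c : α → β) :
    (∀ j, #(({x, y} : Finset α).filter (c · = j)) ≤ 1) ↔ c x ≠ c y := by
  refine ⟨fun h hc => ?_, fun h j => card_le_one.2 ?_⟩
  · have := h (c x)
    rw [filter_true_of_mem (by simp [hc]), card_pair hxy] at this
    omega
  · simp only [mem_filter, mem_insert, mem_singleton]
    rintro a ⟨rfl | rfl, rfl⟩ b ⟨rfl | rfl, hb⟩ <;> first | rfl | simp_all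

lemma mem_convexHull_image_symm_comp {E F : Type*} [AddCommGroup E] [Module ℝ E]
    [AddCommGroup F] [Module ℝ F] (e : E ≃ₗ[ℝ] F) (v : α → F) (s : Set α) (x : E) :
    x ∈ convexHull ℝ ((e.symm ∘ v) '' s) ↔ e x ∈ convexHull ℝ (v '' s) := by
  have h := e.symm.toLinearMap.image_convexHull (v '' s)
  rw [LinearEquiv.coe_coe] at h
  rw [Set.image_comp, ← h, e.image_symm_eq_preimage, Set.mem_preimage]

variable [Fintype α] [DecidableEq α] {P : Finset (Finset α)}

lemma sum_card_filter_of_partition (hdisj : (P : Set (Finset α)).PairwiseDisjoint id)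
    (hcover : P.biUnion id = univ) (p : α → Prop) [DecidablePred p] :
    ∑ B ∈ P, #(B.filter p) = #(univ.filter p) := by
  rw [← hcover, filter_biUnion, card_biUnion]
  · rfl
  · exact fun B hB B' hB' hne => (hdisj hB hB' hne).mono (filter_subset _ _) (filter_subset _ _)

lemma sum_card_of_partition (hdisj : (P : Set (Finset α)).PairwiseDisjoint id)
    (hcover : P.biUnion id = univ) : ∑ B ∈ P, #B = Fintype.card α := by
  simpa using sum_card_filter_of_partition hdisj hcover (fun _ => True)

variable {m : ℕ} {v : α → ℝ} {y : ℝ}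

/-- A block meeting `{v = y}` in `e` points has at least `2 - e` points; summed over the `m + 1`
blocks this gives at least `2m + 2 - #{v = y} ≥ 2m + 1` points, so every bound is tight. -/
lemma card_filter_eq_one_and_card_add_card_filter_eq_two (hv : Function.Injective v)
    (hα : Fintype.card α = 2 * m + 1) (hcard : #P = m + 1)
    (hdisj : (P : Set (Finset α)).PairwiseDisjoint id) (hcover : P.biUnion id = univ)
    (hy : ∀ B ∈ P, y ∈ convexHull ℝ (v '' B)) :
    #(univ.filter (v · = y)) = 1 ∧ ∀ B ∈ P, #B + #(B.filter (v · = y)) = 2 := by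
  have hE : #(univ.filter (v · = y)) ≤ 1 := card_le_one.2 fun a ha b hb => hv <| by
    rw [(mem_filter.1 ha).2, (mem_filter.1 hb).2]
  have hsum : ∑ B ∈ P, (#B + #(B.filter (v · = y))) = 2 * m + 1 + #(univ.filter (v · = y)) := by
    rw [sum_add_distrib, sum_card_of_partition hdisj hcover, hα,
      sum_card_filter_of_partition hdisj hcover]
  have hle : ∀ B ∈ P, 2 ≤ #B + #(B.filter (v · = y)) := fun B hB =>
    two_le_card_add_card_filter_eq_of_mem_convexHull (hy B hB)
  have hlow : ∑ B ∈ P, 2 ≤ ∑ B ∈ P, (#B + #(B.filter (v · = y))) := sum_le_sum hle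
  rw [sum_const, hcard, smul_eq_mul, hsum] at hlow
  refine ⟨by omega, fun B hB => ((sum_eq_sum_iff_of_le hle).1 ?_ B hB).symm⟩
  rw [hsum, sum_const, hcard, smul_eq_mul]
  omega

theorem exists_singleton_and_straddling_pairs (hv : Function.Injective v)
    (hα : Fintype.card α = 2 * m + 1) (hcard : #P = m + 1)
    (hdisj : (P : Set (Finset α)).PairwiseDisjoint id) (hcover : P.biUnion id = univ)
    (hy : ∀ B ∈ P, y ∈ convexHull ℝ (v '' B)) :
    ∃ p, v p = y ∧ {p} ∈ P ∧ ∀ B ∈ P, B ≠ {p} → ∃ a b, v a < y ∧ y < v b ∧ B = {a, b} := by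
  obtain ⟨hE, htight⟩ :=
    card_filter_eq_one_and_card_add_card_filter_eq_two hv hα hcard hdisj hcover hy
  obtain ⟨p, hEp⟩ := card_eq_one.1 hE
  have hp : v p = y := (mem_filter.1 (hEp ▸ mem_singleton_self p : p ∈ univ.filter (v · = y))).2
  have hvy : ∀ a, v a = y ↔ a = p := fun a => by rw [← hp, hv.eq_iff]
  have hcardB : ∀ B ∈ P, #B = if p ∈ B then 1 else 2 := fun B hB => by
    have := htight B hB
    simp_rw [hvy, filter_eq'] at this
    split_ifs at this ⊢ <;> simp at this <;> omega
  have hsingle : ∀ B ∈ P, p ∈ B → B = {p} := fun B hB hpB => eq_singleton_iff_unique_mem.2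
    ⟨hpB, fun a ha => card_le_one.1 (by simp [hcardB B hB, hpB]) a ha p hpB⟩
  obtain ⟨B₀, hB₀, hpB₀⟩ := mem_biUnion.1 (hcover ▸ mem_univ p : p ∈ P.biUnion id)
  refine ⟨p, hp, hsingle B₀ hB₀ hpB₀ ▸ hB₀, fun B hB hne => ?_⟩
  have hpB : p ∉ B := fun h => hne (hsingle B hB h)
  obtain ⟨_, ⟨a, ha, rfl⟩, hay⟩ := exists_le_of_mem_convexHull (hy B hB)
  obtain ⟨_, ⟨b, hb, rfl⟩, hyb⟩ := exists_ge_of_mem_convexHull (hy B hB)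
  have hay : v a < y := hay.lt_of_ne fun h => hpB ((hvy a).1 h ▸ ha)
  have hyb : y < v b := hyb.lt_of_ne fun h => hpB ((hvy b).1 h.symm ▸ hb)
  refine ⟨a, b, hay, hyb,
    (eq_of_subset_of_card_le (insert_subset ha (singleton_subset_iff.2 hb)) ?_).symm⟩
  rw [hcardB B hB, if_neg hpB, card_pair (ne_of_apply_ne v (hay.trans hyb).ne)]

lemma card_filter_lt_add_one_of_straddling_pairs (hdisj : (P : Set (Finset α)).PairwiseDisjoint id)
    (hcover : P.biUnion id = univ) {p : α} (hp : v p = y) (hpP : {p} ∈ P)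
    (hpairs : ∀ B ∈ P, B ≠ {p} → ∃ a b, v a < y ∧ y < v b ∧ B = {a, b}) :
    #(univ.filter (v · < y)) + 1 = #P := by
  rw [← sum_card_filter_of_partition hdisj hcover, ← add_sum_erase P _ hpP,
    ← card_erase_add_one hpP, filter_singleton, if_neg hp.not_lt, card_empty, zero_add,
    card_eq_sum_ones (P.erase {p})]
  refine congrArg (· + 1) (sum_congr rfl fun B hB => ?_)
  obtain ⟨a, b, ha, hb, rfl⟩ := hpairs B (mem_of_mem_erase hB) (ne_of_mem_erase hB)
  rw [filter_insert, if_pos ha, filter_singleton, if_neg hb.not_gt]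
  rfl

end Line

namespace ColoredTverbergLine

variable (m : ℕ)

def leftPt (k : Fin m) : Fin (2 * m + 1) := ⟨k, by omega⟩

def midPt : Fin (2 * m + 1) := ⟨m, by omega⟩

def rightPt (k : Fin m) : Fin (2 * m + 1) := ⟨m + 1 + k, by omega⟩

def position (i : Fin (2 * m + 1)) : ℝ := (i : ℕ)

def vertexMap : (Fin (2 * m + 1) → ℝ) →ᵃ[ℝ] (Fin 1 → ℝ) :=
  (Fintype.linearCombination ℝ ((LinearEquiv.funUnique (Fin 1) ℝ ℝ).symm ∘ position m)).toAffineMap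

def isLowerHalf (k : Fin m) : Bool := decide ((k : ℕ) < (m + 1) / 2)

def coloring (i : Fin (2 * m + 1)) : Fin 3 :=
  if (i : ℕ) < m then (if (i : ℕ) < (m + 1) / 2 then 0 else 1)
  else if (i : ℕ) = m then 2
  else if (i : ℕ) < m + 1 + (m + 1) / 2 then 1 else 0

def pairBlock (k j : Fin m) : Finset (Fin (2 * m + 1)) := {leftPt m k, rightPt m j}

def matchingPartition (g : Fin m → Fin m) : Finset (Finset (Fin (2 * m + 1))) :=
  insert {midPt m} (univ.image fun k => pairBlock m k (g k))

variable {m}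

@[simp] lemma leftPt_inj {k k' : Fin m} : leftPt m k = leftPt m k' ↔ k = k' := by
  simp [leftPt, Fin.ext_iff]

@[simp] lemma rightPt_inj {k k' : Fin m} : rightPt m k = rightPt m k' ↔ k = k' := by
  simp [rightPt, Fin.ext_iff]

@[simp] lemma leftPt_ne_rightPt (k j : Fin m) : leftPt m k ≠ rightPt m j := by
  simp [leftPt, rightPt, Fin.ext_iff]; omega

@[simp] lemma rightPt_ne_leftPt (k j : Fin m) : rightPt m j ≠ leftPt m k :=
  (leftPt_ne_rightPt k j).symm

@[simp] lemma leftPt_ne_midPt (k : Fin m) : leftPt m k ≠ midPt m := by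
  simp [leftPt, midPt, Fin.ext_iff]; omega

@[simp] lemma rightPt_ne_midPt (k : Fin m) : rightPt m k ≠ midPt m := by
  simp [rightPt, midPt, Fin.ext_iff]; omega

@[simp] lemma midPt_ne_leftPt (k : Fin m) : midPt m ≠ leftPt m k := (leftPt_ne_midPt k).symm

@[simp] lemma midPt_ne_rightPt (k : Fin m) : midPt m ≠ rightPt m k := (rightPt_ne_midPt k).symm

lemma leftPt_lt_midPt (k : Fin m) : leftPt m k < midPt m := by
  simp [leftPt, midPt, Fin.lt_def]

lemma midPt_lt_rightPt (k : Fin m) : midPt m < rightPt m k := by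
  simp [rightPt, midPt, Fin.lt_def]; omega

lemma lt_midPt_iff {i : Fin (2 * m + 1)} : i < midPt m ↔ ∃ k, i = leftPt m k := by
  refine ⟨fun h => ⟨⟨i, h⟩, rfl⟩, ?_⟩
  rintro ⟨k, rfl⟩
  exact leftPt_lt_midPt k

lemma midPt_lt_iff {i : Fin (2 * m + 1)} : midPt m < i ↔ ∃ k, i = rightPt m k := by
  refine ⟨fun h => ⟨⟨i - (m + 1), by simp [midPt, Fin.lt_def] at h; omega⟩, ?_⟩, ?_⟩
  · simp [rightPt, midPt, Fin.lt_def, Fin.ext_iff] at h ⊢; omega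
  · rintro ⟨k, rfl⟩
    exact midPt_lt_rightPt k

lemma sum_univ_eq_sum_leftPt_rightPt {M : Type*} [AddCommMonoid M] (f : Fin (2 * m + 1) → M) :
    ∑ i, f i = ∑ k, (f (leftPt m k) + f (rightPt m k)) + f (midPt m) := by
  rw [← (finCongr (by omega : m + (m + 1) = 2 * m + 1)).sum_comp, Fin.sum_univ_add,
    Fin.sum_univ_succ, sum_add_distrib]
  have hmid : Fin.cast (by omega) (Fin.natAdd m (0 : Fin (m + 1))) = midPt m := rfl
  have hright (k : Fin m) : Fin.cast (by omega) (Fin.natAdd m k.succ) = rightPt m k := by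
    ext; simp [rightPt]; omega
  simp only [finCongr_apply, hmid, hright]
  exact (add_left_comm _ _ _).trans (add_comm _ _)

@[simp] lemma coloring_leftPt (k : Fin m) :
    coloring m (leftPt m k) = if isLowerHalf m k then 0 else 1 := by
  by_cases h : (k : ℕ) < (m + 1) / 2 <;> simp [coloring, leftPt, isLowerHalf, h]

@[simp] lemma coloring_rightPt (k : Fin m) :
    coloring m (rightPt m k) = if isLowerHalf m k then 1 else 0 := by
  have : ¬ m + 1 + (k : ℕ) < m ∧ m + 1 + (k : ℕ) ≠ m := by omega
  by_cases h : (k : ℕ) < (m + 1) / 2 <;> simp [coloring, rightPt, isLowerHalf, h, this]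

@[simp] lemma coloring_midPt : coloring m (midPt m) = 2 := by
  simp [coloring, midPt]

/-- The left and the right point with the same index carry the two colours `0` and `1`. -/
lemma card_filter_coloring_eq (j : Fin 3) :
    #(univ.filter (coloring m · = j)) = if (j : ℕ) = 2 then 1 else m := by
  have hpair (k : Fin m) : ((if coloring m (leftPt m k) = j then 1 else 0) +
      if coloring m (rightPt m k) = j then 1 else 0) = if (j : ℕ) = 2 then 0 else 1 := by
    rw [coloring_leftPt, coloring_rightPt]
    fin_cases j <;> cases isLowerHalf m k <;> rfl
  rw [card_filter, sum_univ_eq_sum_leftPt_rightPt, sum_congr rfl fun k _ => hpair k, coloring_midPt]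
  fin_cases j <;> simp

lemma position_strictMono : StrictMono (position m) := fun _ _ h => Nat.cast_lt.2 h

lemma vertexMap_single : (fun i => vertexMap m (Pi.single i 1)) =
    (LinearEquiv.funUnique (Fin 1) ℝ ℝ).symm ∘ position m := by
  ext i
  simp [vertexMap]

lemma injective_vertexMap_single : Function.Injective fun i => vertexMap m (Pi.single i 1) := by
  rw [vertexMap_single]
  exact (LinearEquiv.funUnique (Fin 1) ℝ ℝ).symm.injective.comp position_strictMono.injective

@[simp] lemma leftPt_mem_pairBlock {k k' j : Fin m} : leftPt m k' ∈ pairBlock m k j ↔ k' = k := by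
  simp [pairBlock]

@[simp] lemma rightPt_mem_pairBlock {k j j' : Fin m} : rightPt m j' ∈ pairBlock m k j ↔ j' = j := by
  simp [pairBlock]

@[simp] lemma midPt_notMem_pairBlock (k j : Fin m) : midPt m ∉ pairBlock m k j := by
  simp [pairBlock]

lemma pairBlock_injective_left {k k' j j' : Fin m} (h : pairBlock m k j = pairBlock m k' j') :
    k = k' := by
  simpa [h] using (leftPt_mem_pairBlock.2 rfl : leftPt m k ∈ pairBlock m k j)

lemma pairBlock_ne_singleton_midPt (k j : Fin m) : pairBlock m k j ≠ {midPt m} := fun h => by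
  simpa [h] using (leftPt_mem_pairBlock.2 rfl : leftPt m k ∈ pairBlock m k j)

lemma mem_matchingPartition {g : Fin m → Fin m} {B : Finset (Fin (2 * m + 1))} :
    B ∈ matchingPartition m g ↔ B = {midPt m} ∨ ∃ k, B = pairBlock m k (g k) := by
  simp [matchingPartition, eq_comm]

lemma pairBlock_mem_matchingPartition (g : Fin m → Fin m) (k : Fin m) :
    pairBlock m k (g k) ∈ matchingPartition m g :=
  mem_matchingPartition.2 (Or.inr ⟨k, rfl⟩)

lemma card_matchingPartition (g : Fin m → Fin m) : #(matchingPartition m g) = m + 1 := by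
  rw [matchingPartition, card_insert_of_notMem, card_image_of_injective, card_univ,
    Fintype.card_fin]
  · exact fun k k' h => pairBlock_injective_left h
  · simpa using fun k => pairBlock_ne_singleton_midPt k (g k)

lemma matchingPartition_injective : Function.Injective (matchingPartition m) := by
  intro g g' h
  funext k
  obtain h' | ⟨k', h'⟩ := mem_matchingPartition.1 (h ▸ pairBlock_mem_matchingPartition g k)
  · exact absurd h' (pairBlock_ne_singleton_midPt _ _)
  · obtain rfl := pairBlock_injective_left h'
    have : rightPt m (g k) ∈ pairBlock m k (g' k) := h' ▸ rightPt_mem_pairBlock.2 rfl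
    simpa using this

lemma pairwiseDisjoint_matchingPartition (g : Equiv.Perm (Fin m)) :
    (matchingPartition m g : Set (Finset (Fin (2 * m + 1)))).PairwiseDisjoint id := by
  have hpair {k k' : Fin m} (h : k ≠ k') :
      Disjoint (pairBlock m k (g k)) (pairBlock m k' (g k')) := by
    simp [pairBlock, Ne.symm h]
  intro B hB B' hB' hne
  simp only [coe_insert, coe_image, coe_univ, Set.image_univ, matchingPartition] at hB hB'
  rcases hB with rfl | ⟨k, rfl⟩ <;> rcases hB' with rfl | ⟨k', rfl⟩
  · exact absurd rfl hne
  · exact disjoint_singleton_left.2 (midPt_notMem_pairBlock _ _)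
  · exact disjoint_singleton_right.2 (midPt_notMem_pairBlock _ _)
  · exact hpair fun h => hne (h ▸ rfl)

lemma biUnion_matchingPartition (g : Equiv.Perm (Fin m)) :
    (matchingPartition m g).biUnion id = univ := by
  refine eq_univ_of_forall fun i => mem_biUnion.2 ?_
  rcases lt_trichotomy i (midPt m) with h | rfl | h
  · obtain ⟨k, rfl⟩ := lt_midPt_iff.1 h
    exact ⟨_, pairBlock_mem_matchingPartition g k, by simp⟩
  · exact ⟨_, mem_insert_self _ _, mem_singleton_self _⟩
  · obtain ⟨j, rfl⟩ := midPt_lt_iff.1 h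
    exact ⟨_, pairBlock_mem_matchingPartition g (g.symm j), by simp⟩

lemma rainbow_pairBlock_iff {k j : Fin m} :
    (∀ c, #((pairBlock m k j).filter (coloring m · = c)) ≤ 1) ↔
      isLowerHalf m j = isLowerHalf m k := by
  rw [pairBlock, forall_card_filter_pair_le_one_iff (leftPt_ne_rightPt k j), coloring_leftPt,
    coloring_rightPt]
  cases isLowerHalf m k <;> cases isLowerHalf m j <;> decide

lemma rainbow_matchingPartition {g : Equiv.Perm (Fin m)} (hg : isLowerHalf m ∘ g = isLowerHalf m) :
    ∀ B ∈ matchingPartition m g, ∀ c, #(B.filter (coloring m · = c)) ≤ 1 := by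
  intro B hB c
  obtain rfl | ⟨k, rfl⟩ := mem_matchingPartition.1 hB
  · exact (card_filter_le _ _).trans (card_singleton _).le
  · exact rainbow_pairBlock_iff.2 (congrFun hg k) c

lemma position_midPt_mem_convexHull_matchingPartition (g : Fin m → Fin m) :
    ∀ B ∈ matchingPartition m g, position m (midPt m) ∈ convexHull ℝ (position m '' B) := by
  intro B hB
  obtain rfl | ⟨k, rfl⟩ := mem_matchingPartition.1 hB
  · simp
  · have hl := position_strictMono (leftPt_lt_midPt k)
    have hr := position_strictMono (midPt_lt_rightPt (g k))
    rw [pairBlock, coe_pair, Set.image_pair, convexHull_pair, segment_eq_Icc (hl.trans hr).le]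
    exact ⟨hl.le, hr.le⟩

section Extraction

variable {P : Finset (Finset (Fin (2 * m + 1)))} (hcard : #P = m + 1)
  (hdisj : (P : Set (Finset (Fin (2 * m + 1)))).PairwiseDisjoint id) (hcover : P.biUnion id = univ)
include hcard hdisj hcover

lemma singleton_midPt_mem_and_eq_pairBlock {y : ℝ}
    (hy : ∀ B ∈ P, y ∈ convexHull ℝ (position m '' B)) :
    {midPt m} ∈ P ∧ ∀ B ∈ P, B ≠ {midPt m} → ∃ k j, B = pairBlock m k j := by
  obtain ⟨p, rfl, hpP, hpairs⟩ := exists_singleton_and_straddling_pairs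
    position_strictMono.injective (Fintype.card_fin _) hcard hdisj hcover hy
  have hcount := card_filter_lt_add_one_of_straddling_pairs hdisj hcover rfl hpP hpairs
  simp_rw [position_strictMono.lt_iff_lt, filter_gt_eq_Iio, Fin.card_Iio, hcard] at hcount
  obtain rfl : p = midPt m := Fin.ext (by simp [midPt]; omega)
  refine ⟨hpP, fun B hB hne => ?_⟩
  obtain ⟨a, b, ha, hb, rfl⟩ := hpairs B hB hne
  obtain ⟨k, rfl⟩ := lt_midPt_iff.1 (position_strictMono.lt_iff_lt.1 ha)
  obtain ⟨j, rfl⟩ := midPt_lt_iff.1 (position_strictMono.lt_iff_lt.1 hb)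
  exact ⟨k, j, rfl⟩

lemma exists_perm_eq_matchingPartition
    (hrain : ∀ B ∈ P, ∀ c, #(B.filter (coloring m · = c)) ≤ 1) {y : ℝ}
    (hy : ∀ B ∈ P, y ∈ convexHull ℝ (position m '' B)) :
    ∃ g : Equiv.Perm (Fin m), isLowerHalf m ∘ g = isLowerHalf m ∧ matchingPartition m g = P := by
  obtain ⟨hmid, hpairs⟩ := singleton_midPt_mem_and_eq_pairBlock hcard hdisj hcover hy
  have hpartner (k : Fin m) : ∃ j, pairBlock m k j ∈ P := by
    obtain ⟨B, hB, hkB⟩ := mem_biUnion.1 (hcover ▸ mem_univ (leftPt m k))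
    obtain ⟨k', j, rfl⟩ := hpairs B hB (by rintro rfl; simp at hkB)
    obtain rfl := leftPt_mem_pairBlock.1 hkB
    exact ⟨j, hB⟩
  choose g hg using hpartner
  have hinj : Function.Injective g := fun k k' h => pairBlock_injective_left <|
    hdisj.elim_finset (hg k) (hg k') (rightPt m (g k)) (by simp) (by simp [h])
  refine ⟨Equiv.ofBijective g hinj.bijective_of_finite,
    funext fun k => rainbow_pairBlock_iff.1 (hrain _ (hg k)), ?_⟩
  refine eq_of_subset_of_card_le (fun B hB => ?_) (by rw [hcard, card_matchingPartition])
  obtain rfl | ⟨k, rfl⟩ := mem_matchingPartition.1 hB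
  exacts [hmid, hg k]

end Extraction

lemma card_stabilizer_isLowerHalf :
    Fintype.card {g : Equiv.Perm (Fin m) // isLowerHalf m ∘ g = isLowerHalf m} =
      Nat.factorial ((m + 1) / 2) * Nat.factorial (m / 2) := by
  rw [DomMulAct.stabilizer_card, Fintype.prod_bool, Fintype.card_subtype, Fintype.card_subtype]
  have hlow : #(univ.filter fun k : Fin m => (k : ℕ) < (m + 1) / 2) = (m + 1) / 2 := by
    rw [Fin.card_filter_val_lt]; omega
  have hhigh : #(univ.filter fun k : Fin m => (m + 1) / 2 ≤ (k : ℕ)) = m / 2 := by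
    have := card_filter_add_card_filter_not (s := univ) fun k : Fin m => (k : ℕ) < (m + 1) / 2
    simp only [not_lt, card_univ, Fintype.card_fin] at this
    omega
  simp [isLowerHalf, hlow, hhigh]

theorem tverbergCount_vertexMap_coloring :
    tverbergCount 1 (2 * m) (m + 1) (vertexMap m) (coloring m) =
      Nat.factorial ((m + 1) / 2) * Nat.factorial (m / 2) := by
  have hinj : Function.Injective
      fun g : {g : Equiv.Perm (Fin m) // isLowerHalf m ∘ g = isLowerHalf m} =>
        matchingPartition m g :=
    fun g g' h => Subtype.ext (Equiv.coe_fn_injective (matchingPartition_injective h))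
  rw [← card_stabilizer_isLowerHalf, ← Nat.card_eq_fintype_card, ← Nat.card_range_of_injective hinj,
    Nat.card_coe_set_eq, tverbergCount]
  congr 1
  ext P
  simp only [Set.mem_ofPred_eq, Set.mem_range, vertexMap_single, mem_convexHull_image_symm_comp]
  constructor
  · rintro ⟨hcard, hdisj, hcover, hrain, x, hx⟩
    obtain ⟨g, hg, rfl⟩ := exists_perm_eq_matchingPartition hcard hdisj hcover hrain hx
    exact ⟨⟨g, hg⟩, rfl⟩
  · rintro ⟨⟨g, hg⟩, rfl⟩
    exact ⟨card_matchingPartition g, pairwiseDisjoint_matchingPartition g,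
      biUnion_matchingPartition g, rainbow_matchingPartition hg,
      (LinearEquiv.funUnique (Fin 1) ℝ ℝ).symm (position m (midPt m)),
      by simpa using position_midPt_mem_convexHull_matchingPartition g⟩

end ColoredTverbergLine

theorem tverbergCount_lower_bound_dim_one_optimal_general (r N : ℕ) (hr : 2 ≤ r)
    (hN : N = 2 * (r - 1)) :
    ∃ (f : (Fin (N + 1) → ℝ) →ᵃ[ℝ] (Fin 1 → ℝ)) (c : Fin (N + 1) → Fin 3),
      (∀ j : Fin 3,
        (Finset.univ.filter fun i => c i = j).card = if (j : ℕ) = 2 then 1 else r - 1) ∧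
      (Function.Injective fun i : Fin (N + 1) => f (Pi.single i 1)) ∧
      tverbergCount 1 N r f c =
        Nat.factorial ((r - 1 + 1) / 2) * Nat.factorial ((r - 1) / 2) := by
  obtain ⟨m, rfl⟩ : ∃ m, r = m + 1 := ⟨r - 1, by omega⟩
  obtain rfl : N = 2 * m := by omega
  refine ⟨ColoredTverbergLine.vertexMap m, ColoredTverbergLine.coloring m, fun j => ?_,
    ColoredTverbergLine.injective_vertexMap_single, ?_⟩
  · simpa using ColoredTverbergLine.card_filter_coloring_eq j
  · simpa using ColoredTverbergLine.tverbergCount_vertexMap_coloring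

/-- For `d = 1`, a prime `r ≥ 2` and `N = 2(r-1)`, there is an affine map `f` on the
standard `N`-simplex, with vertices colored with 3 colors with color classes
`|C_0| = |C_1| = r - 1`, `|C_2| = 1` and pairwise distinct vertex images, such that
`T(f) = ⌈(r-1)/2⌉! · ⌊(r-1)/2⌋!`: the lower bound for `d = 1` is optimal. -/
theorem tverbergCount_lower_bound_dim_one_optimal (r N : ℕ) (hr : 2 ≤ r)
    (hrp : Nat.Prime r) (hN : N = 2 * (r - 1)) :
    ∃ (f : (Fin (N + 1) → ℝ) →ᵃ[ℝ] (Fin 1 → ℝ)) (c : Fin (N + 1) → Fin 3),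
      (∀ j : Fin 3,
        (Finset.univ.filter fun i => c i = j).card = if (j : ℕ) = 2 then 1 else r - 1) ∧
      (Function.Injective fun i : Fin (N + 1) => f (Pi.single i 1)) ∧
      tverbergCount 1 N r f c =
        Nat.factorial ((r - 1 + 1) / 2) * Nat.factorial ((r - 1) / 2) :=
  tverbergCount_lower_bound_dim_one_optimal_general r N hr hN
end
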